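/- arXiv:1512.02317 — 3 statements merged into one kernel-verified Lean document; each statement's English description precedes it below -/
import Mathlib

section
/- For any real weights λ, μ > 0 there exists an integer m₀ such that for all m ≥ m₀ the star is the unique minimizer of λπ(G) + μτ(G) over all connected directed graphs G on {1,…,m}: that is, for every connected directed graph G on m vertices not isomorphic to a star, 4λ + 2μ < λπ(G) + μτ(G). -/
open scoped Classical

namespace Money

/-- A finite simple directed graph without loops, on a subset of `Fin n`. -/
structure Digraph (n : ℕ) where
  verts : Finset (Fin n)
  edges : Finset (Fin n × Fin n)
  mem_verts : ∀ e ∈ edges, e.1 ∈ verts ∧ e.2 ∈ verts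
  no_loops : ∀ e ∈ edges, e.1 ≠ e.2

namespace Digraph

variable {n : ℕ}

/-- There is a directed path (possibly empty) from `i` to `j`. -/
def Reaches (G : Digraph n) : Fin n → Fin n → Prop :=
  Relation.ReflTransGen fun a b => (a, b) ∈ G.edges

/-- `G` is connected: nonempty, and any vertex reaches any other by a directed path. -/
def Connected (G : Digraph n) : Prop :=
  G.verts.Nonempty ∧ ∀ i ∈ G.verts, ∀ j ∈ G.verts, G.Reaches i j

/-- `T` is (the edge set of) a spanning `i`-tree of `G`: every vertex `j ≠ i`
has a unique directed path in `T` to `i`. -/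
def IsSpanTree (G : Digraph n) (i : Fin n) (T : Finset (Fin n × Fin n)) : Prop :=
  T ⊆ G.edges ∧
  (∀ j ∈ G.verts, j ≠ i → ∃! k, (j, k) ∈ T) ∧
  (∀ k, (i, k) ∉ T) ∧
  ∀ j ∈ G.verts, Relation.ReflTransGen (fun a b => (a, b) ∈ T) j i

/-- The spanning-tree price of vertex `i` at edge weights `b`. -/
noncomputable def price (G : Digraph n) (i : Fin n) (b : Fin n × Fin n → ℝ) : ℝ :=
  ∑ T ∈ G.edges.powerset.filter (fun T => G.IsSpanTree i T), ∏ e ∈ T, b e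

/-- The price-ratio function `b ↦ p_i(b)/p_j(b)`. -/
noncomputable def priceRatio (G : Digraph n) (i j : Fin n) (b : Fin n × Fin n → ℝ) : ℝ :=
  G.price i b / G.price j b

/-- An edge coordinate `e` is influential for `f` (as a function on positive
weight vectors on the edges of `G`). -/
def Influential (G : Digraph n) (f : (Fin n × Fin n → ℝ) → ℝ) (e : Fin n × Fin n) : Prop :=
  ∃ b b' : Fin n × Fin n → ℝ,
    (∀ e' ∈ G.edges, 0 < b e') ∧ (∀ e' ∈ G.edges, 0 < b' e') ∧
    (∀ e', e' ≠ e → b e' = b' e') ∧ f b ≠ f b'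

/-- `π_ij(G)`: the number of influential edges of the price-ratio `p_i/p_j`. -/
noncomputable def priceCplxPair (G : Digraph n) (i j : Fin n) : ℕ :=
  (G.edges.filter (fun e => G.Influential (G.priceRatio i j) e)).card

/-- The price complexity `π(G) = max_{i ≠ j} π_ij(G)`. -/
noncomputable def priceComplexity (G : Digraph n) : ℕ :=
  ((G.verts ×ˢ G.verts).filter fun p => p.1 ≠ p.2).sup fun p => G.priceCplxPair p.1 p.2

/-- There is a directed walk of length `k` from `i` to `j`. -/
def HasWalk (G : Digraph n) (i j : Fin n) (k : ℕ) : Prop :=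
  ∃ g : ℕ → Fin n, g 0 = i ∧ g k = j ∧ ∀ t < k, (g t, g (t + 1)) ∈ G.edges

/-- Length of a shortest directed path from `i` to `j`. -/
noncomputable def dist (G : Digraph n) (i j : Fin n) : ℕ := sInf {k | G.HasWalk i j k}

/-- The time complexity `τ(G)`: the diameter of `G`. -/
noncomputable def timeComplexity (G : Digraph n) : ℕ :=
  ((G.verts ×ˢ G.verts).filter fun p => p.1 ≠ p.2).sup fun p => G.dist p.1 p.2

def outdeg (G : Digraph n) (v : Fin n) : ℕ := (G.edges.filter fun e => e.1 = v).card

def indeg (G : Digraph n) (v : Fin n) : ℕ := (G.edges.filter fun e => e.2 = v).card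

/-- A directed cycle: connected, and every vertex has exactly one outgoing
and one incoming edge. -/
def IsCycleGraph (G : Digraph n) : Prop :=
  G.Connected ∧ ∀ v ∈ G.verts, G.outdeg v = 1 ∧ G.indeg v = 1

/-- `P` is a (simple) directed path from `s` to `t`, `s ≠ t`. -/
def IsPathGraph (P : Digraph n) (s t : Fin n) : Prop :=
  s ≠ t ∧ s ∈ P.verts ∧ t ∈ P.verts ∧
  (∀ v ∈ P.verts, P.Reaches s v ∧ P.Reaches v t) ∧
  (∀ v ∈ P.verts, v ≠ t → P.outdeg v = 1) ∧ P.outdeg t = 0 ∧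
  (∀ v ∈ P.verts, v ≠ s → P.indeg v = 1) ∧ P.indeg s = 0

/-- Union of two digraphs. -/
def union (G H : Digraph n) : Digraph n where
  verts := G.verts ∪ H.verts
  edges := G.edges ∪ H.edges
  mem_verts := by
    intro e he
    rcases Finset.mem_union.mp he with h | h
    · exact ⟨Finset.mem_union_left _ (G.mem_verts e h).1,
        Finset.mem_union_left _ (G.mem_verts e h).2⟩
    · exact ⟨Finset.mem_union_right _ (H.mem_verts e h).1,
        Finset.mem_union_right _ (H.mem_verts e h).2⟩
  no_loops := by
    intro e he
    rcases Finset.mem_union.mp he with h | h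
    · exact G.no_loops e h
    · exact H.no_loops e h

/-- A chorded cycle: a directed cycle `C` together with a directed path `P`
joining two distinct vertices of `C`, otherwise disjoint from `C`. -/
def IsChordedCycle (G : Digraph n) : Prop :=
  ∃ (C P : Digraph n) (s t : Fin n),
    C.IsCycleGraph ∧ P.IsPathGraph s t ∧ s ∈ C.verts ∧ t ∈ C.verts ∧
    P.verts ∩ C.verts = {s, t} ∧ Disjoint C.edges P.edges ∧ G = C.union P

/-- A `k`-rose: `k` directed cycles sharing a single common vertex, otherwise
pairwise disjoint.  A `0`-rose is a single vertex. -/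
def IsRose (G : Digraph n) (k : ℕ) : Prop :=
  ∃ (j : Fin n) (C : Fin k → Digraph n),
    (∀ i, (C i).IsCycleGraph) ∧ (∀ i, j ∈ (C i).verts) ∧
    (∀ i i', i ≠ i' → (C i).verts ∩ (C i').verts = {j}) ∧
    G.verts = insert j (Finset.univ.biUnion fun i => (C i).verts) ∧
    G.edges = Finset.univ.biUnion fun i => (C i).edges

/-- `H` is a subgraph of `G` (obtained by deleting some edges and vertices). -/
def IsSubgraph (H G : Digraph n) : Prop := H.verts ⊆ G.verts ∧ H.edges ⊆ G.edges

/-- The circuit rank `c(G) = e(G) - v(G) + 1`. -/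
def circuitRank (G : Digraph n) : ℤ := (G.edges.card : ℤ) - (G.verts.card : ℤ) + 1

/-- The edge `ij` is collapsible. -/
def Collapsible (G : Digraph n) (i j : Fin n) : Prop :=
  (i, j) ∈ G.edges ∧ G.outdeg i = 1 ∧ (j, i) ∉ G.edges ∧
  ∀ k, ¬((k, i) ∈ G.edges ∧ (k, j) ∈ G.edges)

/-- `G` is rigid: no collapsible edges. -/
def Rigid (G : Digraph n) : Prop := ∀ i j, ¬G.Collapsible i j

/-- `k` covers the ordinary vertex `i` (whose unique outgoing edge is `ij`). -/
def Covers (G : Digraph n) (k i : Fin n) : Prop :=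
  G.outdeg i = 1 ∧ ∃ j, (i, j) ∈ G.edges ∧
    (((k, i) ∈ G.edges ∧ (k, j) ∈ G.edges) ∨ (k = j ∧ (j, i) ∈ G.edges))

/-- A star on all of `Fin n`: a center joined to every other vertex by a pair
of oppositely directed edges, and no other edges. -/
def IsStar (G : Digraph n) : Prop :=
  ∃ c : Fin n, G.verts = Finset.univ ∧
    G.edges = Finset.univ.filter fun e => (e.1 = c ∧ e.2 ≠ c) ∨ (e.2 = c ∧ e.1 ≠ c)

/-- The complete directed graph on all of `Fin n`. -/
def IsComplete (G : Digraph n) : Prop :=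
  G.verts = Finset.univ ∧ G.edges = Finset.univ.filter fun e => e.1 ≠ e.2

/-- A chorded triangle: a 3-cycle `u → v → w → u` together with the
bidirected pair between `u` and `w`. -/
def IsChordedTriangle (T : Digraph n) : Prop :=
  ∃ u v w : Fin n, u ≠ v ∧ v ≠ w ∧ u ≠ w ∧
    T.verts = {u, v, w} ∧ T.edges = {(u, w), (w, u), (u, v), (v, w)}

end Digraph

end Money

/-!
An edge `k → l` lies in some spanning `i`-tree iff `k ≠ i` and `l` reaches `i` without passing
through `k`, and an edge lying in spanning trees of one of `i`, `j` but not of the other is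
influential for `p_i/p_j`. Counting such edges out of a vertex `v` gives
`π ≥ #(outNbrsToward v i) + 1` and `π ≥ #(outNbrsToward v i ∆ outNbrsToward v j) + 2`.

These bounds force `π ≥ m` for the complete graph (`τ = 1`), `π ≥ 4` as soon as some out-degree is
at least three, which ball counting guarantees when `τ ≤ D < log₃ m`, and `π ≥ 5` for a non-star
of diameter two on many vertices. With `D` so large that `μ (D + 1) > 4λ + 2μ`, each of the cases
`τ = 1`, `τ = 2`, `3 ≤ τ ≤ D` and `τ > D` costs more than the star once `m` is large.
-/

namespace Money

open Finset

variable {α : Type*}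

def ReachIn (E : Finset (α × α)) : α → α → Prop :=
  Relation.ReflTransGen fun a b => (a, b) ∈ E

def WalkIn (E : Finset (α × α)) (i j : α) (k : ℕ) : Prop :=
  ∃ g : ℕ → α, g 0 = i ∧ g k = j ∧ ∀ t < k, (g t, g (t + 1)) ∈ E

noncomputable def walkDist (E : Finset (α × α)) (i j : α) : ℕ := sInf {k | WalkIn E i j k}

noncomputable def avoid (E : Finset (α × α)) (k : α) : Finset (α × α) :=
  E.filter fun e => e.1 ≠ k ∧ e.2 ≠ k

noncomputable def outNbrs (E : Finset (α × α)) (u : α) : Finset α :=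
  (E.filter fun e => e.1 = u).image Prod.snd

noncomputable def outNbrsToward (E : Finset (α × α)) (v i : α) : Finset α :=
  (outNbrs E v).filter fun x => ReachIn (avoid E v) x i

noncomputable def ball (E : Finset (α × α)) : ℕ → α → Finset α
  | 0, v => {v}
  | t + 1, v => insert v ((outNbrs E v).biUnion (ball E t))

variable {E E' : Finset (α × α)} {i j k v x : α}

@[simp]
lemma mem_avoid {e : α × α} : e ∈ avoid E k ↔ e ∈ E ∧ e.1 ≠ k ∧ e.2 ≠ k :=
  mem_filter

lemma avoid_subset (E : Finset (α × α)) (k : α) : avoid E k ⊆ E :=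
  filter_subset _ _

lemma avoid_mono (h : E ⊆ E') (k : α) : avoid E k ⊆ avoid E' k :=
  filter_subset_filter _ h

@[simp]
lemma mem_outNbrs : x ∈ outNbrs E v ↔ (v, x) ∈ E := by
  simp [outNbrs]

lemma mem_outNbrsToward :
    x ∈ outNbrsToward E v i ↔ (v, x) ∈ E ∧ ReachIn (avoid E v) x i := by
  simp [outNbrsToward]

lemma ReachIn.mono (hE : E ⊆ E') (h : ReachIn E i j) : ReachIn E' i j :=
  Relation.ReflTransGen.mono (fun _ _ hab => hE hab) _ _ h

lemma ReachIn.head (hij : (i, j) ∈ E) (h : ReachIn E j k) : ReachIn E i k :=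
  Relation.ReflTransGen.head hij h

lemma eq_of_reachIn_avoid_self (h : ReachIn (avoid E v) v j) : v = j := by
  rcases Relation.ReflTransGen.cases_head h with h | ⟨c, hc, -⟩
  · exact h
  · exact absurd rfl (mem_avoid.mp hc).2.1

/-- Splitting a path to `i` at its last visit to `k`. -/
lemma ReachIn.avoid_or_exists_edge (h : ReachIn E x i) (hik : i ≠ k) :
    ReachIn (avoid E k) x i ∨ ∃ y, (k, y) ∈ E ∧ ReachIn (avoid E k) y i := by
  induction h using Relation.ReflTransGen.head_induction_on with
  | refl => exact Or.inl .refl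
  | @head a c hac _ ih =>
    rcases ih with hc | hc
    · by_cases hak : a = k
      · exact Or.inr ⟨c, hak ▸ hac, hc⟩
      · have hck : c ≠ k := fun hck => hik (eq_of_reachIn_avoid_self (hck ▸ hc)).symm
        exact Or.inl (ReachIn.head (mem_avoid.mpr ⟨hac, hak, hck⟩) hc)
    · exact Or.inr hc

lemma ReachIn.exists_edge_avoid (h : ReachIn E k i) (hki : k ≠ i) :
    ∃ y, (k, y) ∈ E ∧ ReachIn (avoid E k) y i :=
  (h.avoid_or_exists_edge hki.symm).resolve_left
    fun hk => hki (eq_of_reachIn_avoid_self hk)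

lemma walkIn_zero_iff : WalkIn E i j 0 ↔ i = j :=
  ⟨fun ⟨g, h0, h1, _⟩ => h0 ▸ h1, fun h => ⟨fun _ => i, rfl, h, by simp⟩⟩

lemma walkIn_succ_iff {k : ℕ} :
    WalkIn E i j (k + 1) ↔ ∃ y, (i, y) ∈ E ∧ WalkIn E y j k := by
  constructor
  · rintro ⟨g, h0, hk, hs⟩
    exact ⟨g 1, h0 ▸ hs 0 k.succ_pos, fun t => g (t + 1), rfl, hk,
      fun t ht => hs (t + 1) (by omega)⟩
  · rintro ⟨y, hiy, g, h0, hk, hs⟩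
    refine ⟨fun | 0 => i | t + 1 => g t, rfl, hk, fun t ht => ?_⟩
    cases t with
    | zero => simpa [h0] using hiy
    | succ t => exact hs t (by omega)

lemma WalkIn.mono (hE : E ⊆ E') {k : ℕ} (h : WalkIn E i j k) : WalkIn E' i j k :=
  let ⟨g, h0, hk, hs⟩ := h; ⟨g, h0, hk, fun t ht => hE (hs t ht)⟩

lemma ReachIn.exists_walkIn (h : ReachIn E i j) : ∃ k, WalkIn E i j k := by
  induction h using Relation.ReflTransGen.head_induction_on with
  | refl => exact ⟨0, walkIn_zero_iff.mpr rfl⟩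
  | head hac _ ih =>
    obtain ⟨k, hk⟩ := ih
    exact ⟨k + 1, walkIn_succ_iff.mpr ⟨_, hac, hk⟩⟩

lemma walkDist_le {k : ℕ} (h : WalkIn E i j k) : walkDist E i j ≤ k :=
  Nat.sInf_le h

lemma ReachIn.walkIn_walkDist (h : ReachIn E i j) : WalkIn E i j (walkDist E i j) :=
  Nat.sInf_mem h.exists_walkIn

lemma ReachIn.exists_walkDist_lt (h : ReachIn E x i) (hxi : x ≠ i) :
    ∃ y, (x, y) ∈ E ∧ walkDist E y i < walkDist E x i := by
  have hw := h.walkIn_walkDist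
  rcases hd : walkDist E x i with _ | d
  · rw [hd, walkIn_zero_iff] at hw
    exact absurd hw hxi
  · rw [hd, walkIn_succ_iff] at hw
    obtain ⟨y, hxy, hy⟩ := hw
    exact ⟨y, hxy, (walkDist_le hy).trans_lt d.lt_succ_self⟩

/-- The first step leaves `z` for good, so induct on `R.erase z`. -/
lemma ReachIn.exists_walkIn_lt_card {z : α} (h : ReachIn E z j) (R : Finset α)
    (hR : ∀ w, ReachIn E w j → w ∈ R) : ∃ k < R.card, WalkIn E z j k := by
  induction R using Finset.strongInduction generalizing E z with
  | H R ih =>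
    by_cases hzj : z = j
    · exact ⟨0, card_pos.mpr ⟨z, hR z h⟩, walkIn_zero_iff.mpr hzj⟩
    obtain ⟨y, hzy, hy⟩ := h.exists_edge_avoid hzj
    have hR' : ∀ w, ReachIn (avoid E z) w j → w ∈ R.erase z := fun w hw =>
      mem_erase.mpr ⟨fun hwz => hzj (eq_of_reachIn_avoid_self (hwz ▸ hw)),
        hR w (hw.mono (avoid_subset E z))⟩
    obtain ⟨k, hk, hwalk⟩ := ih _ (erase_ssubset (hR z h)) hy hR'
    have := card_erase_lt_of_mem (hR z h)
    exact ⟨k + 1, by omega, walkIn_succ_iff.mpr ⟨y, hzy, hwalk.mono (avoid_subset E z)⟩⟩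

lemma card_ball_le {d : ℕ} (hd : ∀ u, (outNbrs E u).card ≤ d) (t : ℕ) (v : α) :
    (ball E t v).card ≤ (d + 1) ^ t := by
  induction t generalizing v with
  | zero => simp [ball]
  | succ t ih =>
    calc (ball E (t + 1) v).card
        ≤ ∑ y ∈ outNbrs E v, (ball E t y).card + 1 :=
          (card_insert_le _ _).trans (Nat.add_le_add_right card_biUnion_le 1)
      _ ≤ d * (d + 1) ^ t + 1 := by
          gcongr
          exact (sum_le_card_nsmul _ _ _ fun y _ => ih y).trans
            (by rw [smul_eq_mul]; gcongr; exact hd v)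
      _ ≤ (d + 1) ^ (t + 1) := by
          rw [pow_succ]; nlinarith [Nat.one_le_pow t (d + 1) d.succ_pos]

lemma WalkIn.mem_ball {k t : ℕ} (h : WalkIn E v j k) (hkt : k ≤ t) : j ∈ ball E t v := by
  induction t generalizing v k with
  | zero =>
    rw [Nat.le_zero.mp hkt, walkIn_zero_iff] at h
    simp [ball, h]
  | succ t ih =>
    obtain _ | k := k
    · rw [walkIn_zero_iff] at h
      simp [ball, h]
    · obtain ⟨y, hvy, hy⟩ := walkIn_succ_iff.mp h
      exact mem_insert_of_mem (mem_biUnion.mpr ⟨y, mem_outNbrs.mpr hvy, ih hy (by omega)⟩)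

end Money

namespace Money.Digraph

open Finset
open scoped symmDiff

variable {n : ℕ} {G : Digraph n} {i j k l v : Fin n}

lemma reachIn_edges (hv : G.verts = univ) (hc : G.Connected) (i j : Fin n) :
    ReachIn G.edges i j :=
  hc.2 i (hv ▸ mem_univ i) j (hv ▸ mem_univ j)

lemma exists_walkIn_of_timeComplexity_le {D : ℕ} (hv : G.verts = univ) (hc : G.Connected)
    (hτ : G.timeComplexity ≤ D) (hij : i ≠ j) :
    ∃ k, 0 < k ∧ k ≤ D ∧ WalkIn G.edges i j k := by
  have hwalk : WalkIn G.edges i j (G.dist i j) := (reachIn_edges hv hc i j).walkIn_walkDist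
  refine ⟨G.dist i j, Nat.pos_of_ne_zero fun h0 => hij ?_, le_trans ?_ hτ, hwalk⟩
  · exact walkIn_zero_iff.mp (h0 ▸ hwalk)
  · exact le_sup (f := fun p : Fin n × Fin n => G.dist p.1 p.2) (b := (i, j)) (by simp [hv, hij])

lemma mem_edges_of_timeComplexity_le_one (hv : G.verts = univ) (hc : G.Connected)
    (hτ : G.timeComplexity ≤ 1) (hij : i ≠ j) : (i, j) ∈ G.edges := by
  obtain ⟨k, hk0, hk1, hwalk⟩ := exists_walkIn_of_timeComplexity_le hv hc hτ hij
  obtain rfl : k = 1 := by omega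
  simpa [walkIn_succ_iff, walkIn_zero_iff] using hwalk

lemma reachIn_avoid_of_timeComplexity_le_two {u w : Fin n} (hv : G.verts = univ)
    (hc : G.Connected) (hτ : G.timeComplexity ≤ 2) (huw : u ≠ w) (huv : u ≠ v)
    (hwv : w ≠ v) (hmid : (u, v) ∉ G.edges ∨ (v, w) ∉ G.edges) :
    ReachIn (avoid G.edges v) u w := by
  obtain ⟨k, hk0, hk2, hwalk⟩ := exists_walkIn_of_timeComplexity_le hv hc hτ huw
  interval_cases k
  · simp only [walkIn_succ_iff, walkIn_zero_iff, exists_eq_right] at hwalk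
    exact .single (mem_avoid.mpr ⟨hwalk, huv, hwv⟩)
  · simp only [walkIn_succ_iff, walkIn_zero_iff, exists_eq_right] at hwalk
    obtain ⟨y, huy, hyw⟩ := hwalk
    have hyv : y ≠ v := by rintro rfl; tauto
    exact ReachIn.head (mem_avoid.mpr ⟨huy, huv, hyv⟩)
      (.single (mem_avoid.mpr ⟨hyw, hyv, hwv⟩))

/-- The ball of radius `D ≥ τ(G)` around a vertex of maximal out-degree is everything. -/
lemma exists_le_pow_card_outNbrs {D : ℕ} (hv : G.verts = univ) (hc : G.Connected)
    (hτ : G.timeComplexity ≤ D) (hn : 0 < n) :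
    ∃ v, n ≤ ((outNbrs G.edges v).card + 1) ^ D := by
  obtain ⟨v, -, hmax⟩ := exists_max_image univ (fun u => (outNbrs G.edges u).card)
    ⟨⟨0, hn⟩, mem_univ _⟩
  refine ⟨v, ?_⟩
  have hcover : univ ⊆ ball G.edges D v := fun j _ => by
    by_cases hjv : v = j
    · exact (walkIn_zero_iff.mpr hjv).mem_ball (Nat.zero_le D)
    · obtain ⟨k, -, hkD, hwalk⟩ := exists_walkIn_of_timeComplexity_le hv hc hτ hjv
      exact WalkIn.mem_ball hwalk hkD
  simpa using (card_le_card hcover).trans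
    (card_ball_le (fun u => hmax u (mem_univ u)) D v)

/-- A shortest-path tree: every `w ≠ i` steps to an `E`-neighbour strictly closer to `i`. -/
lemma exists_spanTree_subset {E : Finset (Fin n × Fin n)}
    (hE : E ⊆ G.edges) (hreach : ∀ w, ReachIn E w i) : ∃ T ⊆ E, G.IsSpanTree i T := by
  choose! f hfE hflt using fun w (hw : w ≠ i) => (hreach w).exists_walkDist_lt hw
  set T := (univ.filter (· ≠ i)).image fun w => (w, f w)
  have mem_T : ∀ a b, (a, b) ∈ T ↔ a ≠ i ∧ f a = b := by simp [T]
  have hTE : T ⊆ E := fun ⟨a, b⟩ hab => by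
    obtain ⟨hai, rfl⟩ := (mem_T a b).mp hab
    exact hfE a hai
  have hreachT : ∀ w, Relation.ReflTransGen (fun a b => (a, b) ∈ T) w i := fun w => by
    induction hd : walkDist E w i using Nat.strong_induction_on generalizing w with
    | _ d ih =>
      by_cases hwi : w = i
      · exact hwi ▸ .refl
      · exact .head ((mem_T _ _).mpr ⟨hwi, rfl⟩) (ih _ (hd ▸ hflt w hwi) (f w) rfl)
  exact ⟨T, hTE, hTE.trans hE, fun w _ hwi => ⟨f w, (mem_T _ _).mpr ⟨hwi, rfl⟩,
    fun y hy => ((mem_T _ _).mp hy).2.symm⟩, fun y hy => ((mem_T _ _).mp hy).1 rfl,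
    fun w _ => hreachT w⟩

/-- Restricting `k` to the single out-edge `(k, l)` keeps every vertex connected to `i`. -/
lemma exists_spanTree_mem (hv : G.verts = univ) (hc : G.Connected) (hkl : (k, l) ∈ G.edges)
    (hki : k ≠ i) (hl : ReachIn (avoid G.edges k) l i) :
    ∃ T, G.IsSpanTree i T ∧ (k, l) ∈ T := by
  set E := G.edges.filter fun e => e.1 = k → e = (k, l)
  have hklE : (k, l) ∈ E := mem_filter.mpr ⟨hkl, fun _ => rfl⟩
  have havoid : avoid G.edges k ⊆ E := fun e he => by
    obtain ⟨he, hek, -⟩ := mem_avoid.mp he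
    exact mem_filter.mpr ⟨he, fun h => absurd h hek⟩
  have hreach : ∀ w, ReachIn E w i := fun w => by
    induction reachIn_edges hv hc w i using Relation.ReflTransGen.head_induction_on with
    | refl => exact .refl
    | @head a c hac _ ih =>
      by_cases hak : a = k
      · exact hak ▸ ReachIn.head hklE (hl.mono havoid)
      · exact ReachIn.head (mem_filter.mpr ⟨hac, fun h => absurd h hak⟩) ih
  obtain ⟨T, hTE, hT⟩ := exists_spanTree_subset (filter_subset _ _) hreach
  obtain ⟨y, hy, -⟩ := hT.2.1 k (hv ▸ mem_univ k) hki
  obtain rfl : y = l := by simpa using (mem_filter.mp (hTE hy)).2 rfl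
  exact ⟨T, hT, hy⟩

/-- A return of the tree path from `l` to `k` would have to leave `k` along its unique tree edge
`(k, l)` again. -/
lemma IsSpanTree.reachIn_avoid {T : Finset (Fin n × Fin n)} (hv : G.verts = univ)
    (hT : G.IsSpanTree i T) (hkl : (k, l) ∈ T) : ReachIn (avoid G.edges k) l i := by
  have hki : k ≠ i := by rintro rfl; exact hT.2.2.1 l hkl
  rcases ReachIn.avoid_or_exists_edge (hT.2.2.2 l (hv ▸ mem_univ l)) hki.symm
    with h | ⟨y, hky, hy⟩
  · exact h.mono (avoid_mono hT.1 k)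
  · obtain ⟨z, -, hz⟩ := hT.2.1 k (hv ▸ mem_univ k) hki
    exact (hz l hkl).trans (hz y hky).symm ▸ hy.mono (avoid_mono hT.1 k)

def InSomeSpanTree (G : Digraph n) (i : Fin n) (e : Fin n × Fin n) : Prop :=
  ∃ T, G.IsSpanTree i T ∧ e ∈ T

lemma inSomeSpanTree_iff (hv : G.verts = univ) (hc : G.Connected) :
    G.InSomeSpanTree i (k, l) ↔
      (k, l) ∈ G.edges ∧ k ≠ i ∧ ReachIn (avoid G.edges k) l i := by
  constructor
  · rintro ⟨T, hT, hkl⟩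
    exact ⟨hT.1 hkl, fun hki => hT.2.2.1 l (hki ▸ hkl), hT.reachIn_avoid hv hkl⟩
  · rintro ⟨hkl, hki, hl⟩
    exact exists_spanTree_mem hv hc hkl hki hl

lemma inSomeSpanTree_iff_mem_outNbrsToward (hv : G.verts = univ) (hc : G.Connected)
    (hvi : v ≠ i) : G.InSomeSpanTree i (v, l) ↔ l ∈ outNbrsToward G.edges v i := by
  rw [inSomeSpanTree_iff hv hc, mem_outNbrsToward]
  tauto

lemma not_inSomeSpanTree_self : ¬G.InSomeSpanTree i (i, l) :=
  fun ⟨_, hT, hil⟩ => hT.2.2.1 l hil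

lemma exists_spanTree (hv : G.verts = univ) (hc : G.Connected) (i : Fin n) :
    ∃ T, G.IsSpanTree i T :=
  (exists_spanTree_subset subset_rfl fun w => reachIn_edges hv hc w i).imp fun _ h => h.2

lemma exists_inSomeSpanTree (hv : G.verts = univ) (hc : G.Connected) (hij : i ≠ j) :
    ∃ y, G.InSomeSpanTree j (i, y) := by
  obtain ⟨T, hT⟩ := exists_spanTree hv hc j
  obtain ⟨y, hy, -⟩ := hT.2.1 i (hv ▸ mem_univ i) hij
  exact ⟨y, T, hT, hy⟩

noncomputable def spanTrees (G : Digraph n) (i : Fin n) : Finset (Finset (Fin n × Fin n)) :=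
  G.edges.powerset.filter fun T => G.IsSpanTree i T

lemma mem_spanTrees {T : Finset (Fin n × Fin n)} : T ∈ G.spanTrees i ↔ G.IsSpanTree i T := by
  simpa [spanTrees] using fun hT => hT.1

lemma price_one (G : Digraph n) (i : Fin n) : G.price i (fun _ => 1) = (G.spanTrees i).card := by
  simp [price, spanTrees]

lemma price_two_at (G : Digraph n) (i : Fin n) (e : Fin n × Fin n) :
    G.price i (fun e' => if e' = e then 2 else 1) =
      (G.spanTrees i).card + ((G.spanTrees i).filter (e ∈ ·)).card := by
  have hterm : ∀ T : Finset (Fin n × Fin n),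
      ∏ e' ∈ T, (if e' = e then (2 : ℝ) else 1) = 1 + if e ∈ T then 1 else 0 := fun T => by
    rw [prod_ite_eq']
    split_ifs <;> norm_num
  simp only [price, hterm, sum_add_distrib, sum_boole]
  simp [spanTrees]

lemma card_spanTrees_pos (hv : G.verts = univ) (hc : G.Connected) (i : Fin n) :
    0 < (G.spanTrees i).card := by
  obtain ⟨T, hT⟩ := exists_spanTree hv hc i
  exact card_pos.mpr ⟨T, mem_spanTrees.mpr hT⟩

lemma card_filter_mem_spanTrees_pos_iff {e : Fin n × Fin n} :
    0 < ((G.spanTrees i).filter (e ∈ ·)).card ↔ G.InSomeSpanTree i e := by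
  simp only [card_pos, filter_nonempty_iff, mem_spanTrees, InSomeSpanTree]

/-- Doubling the weight of `e` from the all-ones weights turns `p_i = Nᵢ` into `Nᵢ + Aᵢ`,
where `Nᵢ` counts the `i`-trees and `Aᵢ` those through `e`; the ratio survives only if
`Aᵢ Nⱼ = Aⱼ Nᵢ`, impossible when exactly one of `Aᵢ`, `Aⱼ` vanishes. -/
lemma influential_priceRatio (hv : G.verts = univ) (hc : G.Connected) {e : Fin n × Fin n}
    (he : ¬(G.InSomeSpanTree i e ↔ G.InSomeSpanTree j e)) :
    G.Influential (G.priceRatio i j) e := by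
  refine ⟨fun _ => 1, fun e' => if e' = e then 2 else 1, fun _ _ => one_pos,
    fun e' _ => by dsimp only; split_ifs <;> norm_num, fun e' he' => by simp [he'], ?_⟩
  have hNi := card_spanTrees_pos hv hc i
  have hNj := card_spanTrees_pos hv hc j
  simp only [priceRatio, price_one, price_two_at]
  rw [Ne, div_eq_div_iff (by positivity) (by positivity)]
  intro heq
  have hcross : (((G.spanTrees i).filter (e ∈ ·)).card * (G.spanTrees j).card : ℝ) =
      ((G.spanTrees j).filter (e ∈ ·)).card * (G.spanTrees i).card := by linear_combination -heq
  norm_cast at hcross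
  apply he
  rw [← card_filter_mem_spanTrees_pos_iff, ← card_filter_mem_spanTrees_pos_iff,
    ← mul_pos_iff_of_pos_right hNj, hcross, mul_pos_iff_of_pos_right hNi]

lemma card_le_priceComplexity (hv : G.verts = univ) (hc : G.Connected) (hij : i ≠ j)
    {S : Finset (Fin n × Fin n)}
    (hS : ∀ e ∈ S, ¬(G.InSomeSpanTree i e ↔ G.InSomeSpanTree j e)) :
    S.card ≤ G.priceComplexity := by
  have hSE : S ⊆ G.edges := fun e he => by
    by_cases hi : G.InSomeSpanTree i e
    · obtain ⟨T, hT, heT⟩ := hi; exact hT.1 heT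
    · obtain ⟨T, hT, heT⟩ := (not_iff.mp (hS e he)).mp hi; exact hT.1 heT
  calc S.card ≤ G.priceCplxPair i j :=
        card_le_card fun e he => mem_filter.mpr ⟨hSE he, influential_priceRatio hv hc (hS e he)⟩
    _ ≤ G.priceComplexity :=
        le_sup (f := fun p : Fin n × Fin n => G.priceCplxPair p.1 p.2) (b := (i, j))
          (by simp [hv, hij])

/-- The edges from `k` towards `i` lie in `i`-trees but in no `k`-tree; one more edge leaving `i`
lies in a `k`-tree only. -/
lemma card_outNbrsToward_add_one_le (hv : G.verts = univ) (hc : G.Connected) (hik : i ≠ k) :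
    (outNbrsToward G.edges k i).card + 1 ≤ G.priceComplexity := by
  obtain ⟨y, hy⟩ := exists_inSomeSpanTree hv hc hik
  have hnot : (i, y) ∉ (outNbrsToward G.edges k i).map (.sectR k _) := by simp [hik.symm]
  refine (card_map (Function.Embedding.sectR k _) ▸ card_insert_of_notMem hnot) ▸
    card_le_priceComplexity hv hc hik fun e he => ?_
  rcases mem_insert.mp he with rfl | he
  · simp [not_inSomeSpanTree_self, hy]
  · obtain ⟨x, hx, rfl⟩ := mem_map.mp he
    simp [not_inSomeSpanTree_self, (inSomeSpanTree_iff_mem_outNbrsToward hv hc hik.symm).mpr hx]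

lemma card_symmDiff_outNbrsToward_add_two_le (hv : G.verts = univ) (hc : G.Connected)
    (hiv : i ≠ v) (hjv : j ≠ v) (hij : i ≠ j) :
    (outNbrsToward G.edges v i ∆ outNbrsToward G.edges v j).card + 2 ≤ G.priceComplexity := by
  obtain ⟨y, hy⟩ := exists_inSomeSpanTree hv hc hij
  obtain ⟨y', hy'⟩ := exists_inSomeSpanTree hv hc hij.symm
  set S := (outNbrsToward G.edges v i ∆ outNbrsToward G.edges v j).map (.sectR v _)
  have hS : (insert (i, y) (insert (j, y') S)).card = S.card + 2 := by
    rw [card_insert_of_notMem, card_insert_of_notMem] <;> simp [S, hiv.symm, hjv.symm, hij]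
  rw [← card_map (Function.Embedding.sectR v _), ← hS]
  refine card_le_priceComplexity hv hc hij fun e he => ?_
  simp only [mem_insert, S, mem_map] at he
  rcases he with rfl | rfl | ⟨x, hx, rfl⟩
  · simp [not_inSomeSpanTree_self, hy]
  · simp [not_inSomeSpanTree_self, hy']
  · rw [Function.Embedding.sectR_apply, inSomeSpanTree_iff_mem_outNbrsToward hv hc hiv.symm,
      inSomeSpanTree_iff_mem_outNbrsToward hv hc hjv.symm]
    rw [mem_symmDiff] at hx
    tauto

lemma le_priceComplexity_of_timeComplexity_le_one (hv : G.verts = univ) (hc : G.Connected)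
    (hτ : G.timeComplexity ≤ 1) (hn : 2 ≤ n) : n ≤ G.priceComplexity := by
  obtain ⟨k, i, hik⟩ : ∃ k i : Fin n, i ≠ k :=
    ⟨⟨0, by omega⟩, ⟨1, by omega⟩, by simp⟩
  have hall : outNbrsToward G.edges k i = univ.erase k := by
    ext x
    rw [mem_outNbrsToward, mem_erase]
    constructor
    · exact fun ⟨hkx, _⟩ => ⟨fun hxk => G.no_loops _ hkx (hxk ▸ rfl), mem_univ x⟩
    · refine fun ⟨hxk, _⟩ =>
        ⟨mem_edges_of_timeComplexity_le_one hv hc hτ (Ne.symm hxk), ?_⟩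
      by_cases hxi : x = i
      · exact hxi ▸ .refl
      · exact .single (mem_avoid.mpr
          ⟨mem_edges_of_timeComplexity_le_one hv hc hτ hxi, hxk, hik⟩)
  have := card_outNbrsToward_add_one_le hv hc hik
  rwa [hall, card_erase_of_mem (mem_univ k), card_univ, Fintype.card_fin,
    Nat.sub_add_cancel (by omega)] at this

/-- With `π ≤ 3`, any two out-neighbours of `v` are comparable under reachability avoiding `v`
(else the symmetric difference bound fails), so an out-neighbour with the most predecessors is
reached from all of them, and the bound `#(outNbrsToward v x) ≤ 2` caps the out-degree. -/
lemma four_le_priceComplexity_of_three_le_card_outNbrs (hv : G.verts = univ) (hc : G.Connected)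
    (hdeg : 3 ≤ (outNbrs G.edges v).card) : 4 ≤ G.priceComplexity := by
  by_contra! hπ
  have hne_v : ∀ x ∈ outNbrs G.edges v, x ≠ v := fun x hx hxv =>
    G.no_loops _ (mem_outNbrs.mp hx) (hxv ▸ rfl)
  have hself : ∀ x ∈ outNbrs G.edges v, x ∈ outNbrsToward G.edges v x := fun x hx =>
    mem_outNbrsToward.mpr ⟨mem_outNbrs.mp hx, .refl⟩
  have hcomp : ∀ x ∈ outNbrs G.edges v, ∀ y ∈ outNbrs G.edges v,
      x ∈ outNbrsToward G.edges v y ∨ y ∈ outNbrsToward G.edges v x := by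
    intro x hx y hy
    by_contra! hxy
    have hxy_ne : x ≠ y := fun h => hxy.1 (h ▸ hself x hx)
    have hsub : {x, y} ⊆ outNbrsToward G.edges v x ∆ outNbrsToward G.edges v y := by
      simp [insert_subset_iff, mem_symmDiff, hself x hx, hself y hy, hxy.1, hxy.2]
    have := card_symmDiff_outNbrsToward_add_two_le hv hc (hne_v x hx) (hne_v y hy) hxy_ne
    have := card_le_card hsub
    rw [card_pair hxy_ne] at this
    omega
  obtain ⟨x₀, hx₀, hmax⟩ := exists_max_image (outNbrs G.edges v)
    (fun x => (outNbrsToward G.edges v x).card) (card_pos.mp (by omega))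
  have hall : outNbrs G.edges v ⊆ outNbrsToward G.edges v x₀ := fun x hx => by
    rcases hcomp x hx x₀ hx₀ with h | h
    · exact h
    · have hsub : outNbrsToward G.edges v x₀ ⊆ outNbrsToward G.edges v x := fun z hz => by
        rw [mem_outNbrsToward] at hz h ⊢
        exact ⟨hz.1, hz.2.trans h.2⟩
      exact eq_of_subset_of_card_le hsub (hmax x hx) ▸ hself x hx
  have := card_outNbrsToward_add_one_le hv hc (hne_v x₀ hx₀)
  have := card_le_card hall
  omega

lemma four_le_priceComplexity {D : ℕ} (hv : G.verts = univ) (hc : G.Connected)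
    (hτ : G.timeComplexity ≤ D) (hn : 3 ^ D < n) : 4 ≤ G.priceComplexity := by
  obtain ⟨v, hball⟩ := exists_le_pow_card_outNbrs hv hc hτ (Nat.zero_lt_of_lt hn)
  refine four_le_priceComplexity_of_three_le_card_outNbrs hv hc (v := v) ?_
  by_contra! hdeg
  have : ((outNbrs G.edges v).card + 1) ^ D ≤ 3 ^ D := Nat.pow_le_pow_left (by omega) D
  omega

lemma card_outNbrsToward_le_three (hv : G.verts = univ) (hc : G.Connected)
    (hπ : G.priceComplexity ≤ 4) (hik : i ≠ k) : (outNbrsToward G.edges k i).card ≤ 3 := by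
  have := card_outNbrsToward_add_one_le hv hc hik
  omega

/-- If `v → x` were missing, every out-neighbour of `v` would reach `x` avoiding `v`. -/
lemma mem_edges_of_three_lt_card_outNbrs {x : Fin n} (hv : G.verts = univ) (hc : G.Connected)
    (hτ : G.timeComplexity ≤ 2) (hπ : G.priceComplexity ≤ 4)
    (hdeg : 3 < (outNbrs G.edges v).card) (hxv : x ≠ v) : (v, x) ∈ G.edges := by
  by_contra hvx
  have hsub : outNbrs G.edges v ⊆ outNbrsToward G.edges v x := fun y hy => by
    have hvy := mem_outNbrs.mp hy
    have hyv : y ≠ v := fun h => G.no_loops _ hvy (h ▸ rfl)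
    have hyx : y ≠ x := fun h => hvx (h ▸ hvy)
    exact mem_outNbrsToward.mpr
      ⟨hvy, reachIn_avoid_of_timeComplexity_le_two hv hc hτ hyx hyv hxv (Or.inr hvx)⟩
  have := card_le_card hsub
  have := card_outNbrsToward_le_three hv hc hπ hxv
  omega

lemma isStar_of_forall_mem_edges (hv : G.verts = univ) (hc : G.Connected)
    (hdom : ∀ x, x ≠ v → (v, x) ∈ G.edges)
    (hE : ∀ a b, (a, b) ∈ G.edges → a = v ∨ b = v) : G.IsStar := by
  refine ⟨v, hv, ?_⟩
  ext ⟨a, b⟩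
  simp only [mem_filter, mem_univ, true_and]
  constructor
  · intro hab
    have := G.no_loops _ hab
    rcases hE a b hab with rfl | rfl <;> simp_all [eq_comm]
  · rintro (⟨rfl, hb⟩ | ⟨rfl, ha⟩)
    · exact hdom b hb
    · obtain ⟨y, hay, -⟩ := (reachIn_edges hv hc a b).exists_edge_avoid ha
      exact (hE a y hay).resolve_left ha ▸ hay

/-- With `a → b` avoiding `v`, the set `outNbrsToward v b` contains `a` and `b`; if it missed
`outNbrsToward v j`, the symmetric difference would contain `a`, `b` and `j`. -/
lemma exists_mem_outNbrsToward_inter {a b : Fin n} (hv : G.verts = univ) (hc : G.Connected)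
    (hπ : G.priceComplexity ≤ 4) (hdom : ∀ x, x ≠ v → (v, x) ∈ G.edges)
    (hab : (a, b) ∈ G.edges) (hav : a ≠ v) (hbv : b ≠ v) (hjv : j ≠ v) :
    ∃ z ∈ outNbrsToward G.edges v b, z ∈ outNbrsToward G.edges v j := by
  have hself : ∀ x, x ≠ v → x ∈ outNbrsToward G.edges v x := fun x hxv =>
    mem_outNbrsToward.mpr ⟨hdom x hxv, .refl⟩
  by_contra! hdisj
  have ha : a ∈ outNbrsToward G.edges v b :=
    mem_outNbrsToward.mpr ⟨hdom a hav, .single (mem_avoid.mpr ⟨hab, hav, hbv⟩)⟩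
  have hjb : j ∉ outNbrsToward G.edges v b := fun h => hdisj j h (hself j hjv)
  have hbj : b ≠ j := fun h => hjb (h ▸ hself b hbv)
  have hsub : {a, b, j} ⊆ outNbrsToward G.edges v b ∆ outNbrsToward G.edges v j := by
    simp [insert_subset_iff, mem_symmDiff, ha, hself b hbv, hself j hjv, hjb,
      hdisj a ha, hdisj b (hself b hbv)]
  have hcard : ({a, b, j} : Finset (Fin n)).card = 3 := by
    rw [card_insert_of_notMem, card_pair hbj]
    have haj : a ≠ j := fun h => hjb (h ▸ ha)
    simp [G.no_loops _ hab, haj]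
  have := card_le_card hsub
  have := card_symmDiff_outNbrsToward_add_two_le hv hc hbv hjv hbj
  omega

/-- All out-neighbours `x ≠ v` of `u` with `x → v` reach any one of them through `v`. -/
lemma card_filter_outNbrs_mem_edges_le {u : Fin n} (hv : G.verts = univ) (hc : G.Connected)
    (hπ : G.priceComplexity ≤ 4) (hdom : ∀ x, x ≠ v → (v, x) ∈ G.edges) (huv : u ≠ v) :
    ((outNbrs G.edges u).filter fun x => x ≠ v ∧ (x, v) ∈ G.edges).card ≤ 3 := by
  rcases eq_empty_or_nonempty ((outNbrs G.edges u).filter fun x => x ≠ v ∧ (x, v) ∈ G.edges)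
    with h | ⟨y, hy⟩
  · simp [h]
  obtain ⟨huy, hyv, -⟩ := mem_filter.mp hy
  have hyu : y ≠ u := fun h => G.no_loops _ (mem_outNbrs.mp huy) (h ▸ rfl)
  refine le_trans (card_le_card fun x hx => ?_) (card_outNbrsToward_le_three hv hc hπ hyu)
  obtain ⟨hux, hxv, hxvE⟩ := mem_filter.mp hx
  refine mem_outNbrsToward.mpr ⟨mem_outNbrs.mp hux, ?_⟩
  by_cases hxy : x = y
  · exact hxy ▸ .refl
  have hxu : x ≠ u := fun h => G.no_loops _ (mem_outNbrs.mp hux) (h ▸ rfl)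
  exact ReachIn.head (mem_avoid.mpr ⟨hxvE, hxu, huv.symm⟩)
    (.single (mem_avoid.mpr ⟨hdom y hyv, huv.symm, hyu⟩))

/-- Every `x ≠ v` without the edge `x → v` reaches a fixed in-neighbour of `v` avoiding `v`. -/
lemma card_filter_not_mem_edges_le (hv : G.verts = univ) (hc : G.Connected)
    (hτ : G.timeComplexity ≤ 2) (hπ : G.priceComplexity ≤ 4)
    (hdom : ∀ x, x ≠ v → (v, x) ∈ G.edges) :
    (univ.filter fun x => x ≠ v ∧ (x, v) ∉ G.edges).card ≤ 3 := by
  rcases eq_empty_or_nonempty (univ.filter fun x => x ≠ v ∧ (x, v) ∉ G.edges)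
    with h | ⟨y, hy⟩
  · simp [h]
  obtain ⟨i, hiv, hi⟩ : ∃ i, i ≠ v ∧ (i, v) ∈ G.edges := by
    rcases Relation.ReflTransGen.cases_tail (reachIn_edges hv hc y v) with h | ⟨i, -, hi⟩
    · exact absurd h.symm (mem_filter.mp hy).2.1
    · exact ⟨i, fun h => G.no_loops _ hi (h ▸ rfl), hi⟩
  refine le_trans (card_le_card fun x hx => ?_) (card_outNbrsToward_le_three hv hc hπ hiv)
  obtain ⟨-, hxv, hxvE⟩ := mem_filter.mp hx
  have hxi : x ≠ i := fun h => hxvE (h ▸ hi)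
  exact mem_outNbrsToward.mpr
    ⟨hdom x hxv, reachIn_avoid_of_timeComplexity_le_two hv hc hτ hxi hxv hiv (Or.inl hxvE)⟩

lemma card_outNbrs_avoid_le (hv : G.verts = univ) (hc : G.Connected)
    (hτ : G.timeComplexity ≤ 2) (hπ : G.priceComplexity ≤ 4)
    (hdom : ∀ x, x ≠ v → (v, x) ∈ G.edges) (u : Fin n) :
    (outNbrs (avoid G.edges v) u).card ≤ 6 := by
  by_cases huv : u = v
  · have : outNbrs (avoid G.edges v) u = ∅ := by
      ext x; simp [huv]
    simp [this]
  have hsub : outNbrs (avoid G.edges v) u ⊆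
      ((outNbrs G.edges u).filter fun x => x ≠ v ∧ (x, v) ∈ G.edges) ∪
        univ.filter fun x => x ≠ v ∧ (x, v) ∉ G.edges := fun x hx => by
    obtain ⟨hux, -, hxv⟩ := mem_avoid.mp (mem_outNbrs.mp hx)
    by_cases hxvE : (x, v) ∈ G.edges <;> simp [hux, hxv, hxvE]
  have := card_filter_outNbrs_mem_edges_le hv hc hπ hdom huv
  have := card_filter_not_mem_edges_le hv hc hτ hπ hdom
  have := (card_le_card hsub).trans (card_union_le _ _)
  omega

/-- A shortest walk from `z` to `j` avoiding `v` stays inside `outNbrsToward v j`, which has at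
most three elements. -/
lemma exists_mem_ball_avoid {b : Fin n} (hv : G.verts = univ) (hc : G.Connected)
    (hπ : G.priceComplexity ≤ 4) (hdom : ∀ x, x ≠ v → (v, x) ∈ G.edges)
    {a : Fin n} (hab : (a, b) ∈ G.edges) (hav : a ≠ v) (hbv : b ≠ v) (hjv : j ≠ v) :
    ∃ z ∈ outNbrsToward G.edges v b, j ∈ ball (avoid G.edges v) 2 z := by
  obtain ⟨z, hzb, hzj⟩ := exists_mem_outNbrsToward_inter hv hc hπ hdom hab hav hbv hjv
  refine ⟨z, hzb, ?_⟩
  have hR : ∀ w, ReachIn (avoid G.edges v) w j → w ∈ outNbrsToward G.edges v j := fun w hw =>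
    mem_outNbrsToward.mpr ⟨hdom w fun h => hjv (eq_of_reachIn_avoid_self (h ▸ hw)).symm, hw⟩
  obtain ⟨k, hk, hwalk⟩ := (mem_outNbrsToward.mp hzj).2.exists_walkIn_lt_card _ hR
  have := card_outNbrsToward_le_three hv hc hπ hjv
  exact hwalk.mem_ball (by omega)

/-- In diameter two with `π ≤ 4`, ball counting gives a vertex `v` of out-degree at least four,
which then dominates everything; unless `G` is the star, some edge `a → b` avoids it, and every
other vertex lies within two steps, avoiding `v`, of one of the at most three vertices of
`outNbrsToward v b`, whose out-degrees away from `v` are at most six: this bounds `n`. -/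
lemma five_le_priceComplexity (hv : G.verts = univ) (hc : G.Connected)
    (hτ : G.timeComplexity ≤ 2) (hns : ¬G.IsStar) (hn : 149 ≤ n) :
    5 ≤ G.priceComplexity := by
  by_contra! hπ
  replace hπ : G.priceComplexity ≤ 4 := by omega
  obtain ⟨v, hball⟩ := exists_le_pow_card_outNbrs hv hc hτ (by omega)
  have hdeg : 3 < (outNbrs G.edges v).card := by
    by_contra! hdeg
    have : ((outNbrs G.edges v).card + 1) ^ 2 ≤ 4 ^ 2 := Nat.pow_le_pow_left (by omega) 2
    omega
  have hdom : ∀ x, x ≠ v → (v, x) ∈ G.edges := fun x hxv =>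
    mem_edges_of_three_lt_card_outNbrs hv hc hτ hπ hdeg hxv
  obtain ⟨a, b, hab, hav, hbv⟩ : ∃ a b, (a, b) ∈ G.edges ∧ a ≠ v ∧ b ≠ v := by
    by_contra! h
    exact hns (isStar_of_forall_mem_edges hv hc hdom fun a b hab => or_iff_not_imp_left.mpr
      (h a b hab))
  have hcover : univ.erase v ⊆ (outNbrsToward G.edges v b).biUnion (ball (avoid G.edges v) 2) :=
    fun j hj => mem_biUnion.mpr
      (exists_mem_ball_avoid hv hc hπ hdom hab hav hbv (mem_erase.mp hj).1)
  have hcard := (card_le_card hcover).trans card_biUnion_le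
  have hsum : ∑ z ∈ outNbrsToward G.edges v b, (ball (avoid G.edges v) 2 z).card ≤
      (outNbrsToward G.edges v b).card * 7 ^ 2 :=
    sum_le_card_nsmul _ _ _ fun z _ => card_ball_le (card_outNbrs_avoid_le hv hc hτ hπ hdom) 2 z
  have := card_outNbrsToward_le_three hv hc hπ hbv
  rw [card_erase_of_mem (mem_univ v), card_univ, Fintype.card_fin] at hcard
  omega

lemma priceComplexity_timeComplexity_cases (hv : G.verts = univ) (hc : G.Connected)
    (hns : ¬G.IsStar) (D : ℕ) (hn : 3 ^ D + 149 ≤ n) :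
    n ≤ G.priceComplexity ∨ (5 ≤ G.priceComplexity ∧ 2 ≤ G.timeComplexity) ∨
      (4 ≤ G.priceComplexity ∧ 3 ≤ G.timeComplexity) ∨ D < G.timeComplexity := by
  have hn3 : 3 ^ D < n := (Nat.lt_add_of_pos_right (by norm_num)).trans_le hn
  have hn149 : 149 ≤ n := le_of_add_le_right hn
  rcases le_or_gt G.timeComplexity 1 with hτ | hτ
  · exact .inl (le_priceComplexity_of_timeComplexity_le_one hv hc hτ (by omega))
  rcases le_or_gt G.timeComplexity 2 with hτ' | hτ'
  · exact .inr (.inl ⟨five_le_priceComplexity hv hc hτ' hns hn149, hτ⟩)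
  rcases le_or_gt G.timeComplexity D with hτD | hτD
  · exact .inr (.inr (.inl ⟨four_le_priceComplexity hv hc hτD hn3, hτ'⟩))
  · exact .inr (.inr (.inr hτD))

end Money.Digraph

open Money Money.Digraph

/-- for any positive weights `λ, μ`, for all large enough `m` the
star is the unique minimizer of `λπ(G) + μτ(G)` over connected graphs on
`{1,…,m}`. -/
theorem stmt1 (lam mu : ℝ) (hlam : 0 < lam) (hmu : 0 < mu) :
    ∃ m₀ : ℕ, ∀ m : ℕ, m₀ ≤ m → ∀ G : Money.Digraph m,
      G.verts = Finset.univ → G.Connected → ¬G.IsStar →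
      4 * lam + 2 * mu <
        lam * (G.priceComplexity : ℝ) + mu * (G.timeComplexity : ℝ) := by
  set D := ⌈4 * lam / mu⌉₊ + 2
  set c := ⌈2 * mu / lam⌉₊
  have hD : 4 * lam ≤ ⌈4 * lam / mu⌉₊ * mu := (div_le_iff₀ hmu).mp (Nat.le_ceil _)
  have hm₀ : 2 * mu ≤ c * lam := (div_le_iff₀ hlam).mp (Nat.le_ceil _)
  refine ⟨3 ^ D + 149 + c, fun m hm G hv hc hns => ?_⟩
  have hmR : (c + 149 : ℝ) ≤ m := by
    exact_mod_cast (by linarith [Nat.zero_le (3 ^ D)] : c + 149 ≤ m)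
  have hπ : (0 : ℝ) ≤ G.priceComplexity := Nat.cast_nonneg _
  have hτ : (0 : ℝ) ≤ G.timeComplexity := Nat.cast_nonneg _
  rcases priceComplexity_timeComplexity_cases hv hc hns D ((Nat.le_add_right _ _).trans hm)
    with h | ⟨h, h'⟩ | ⟨h, h'⟩ | h
  · nlinarith [show (m : ℝ) ≤ G.priceComplexity by exact_mod_cast h]
  · nlinarith [show (5 : ℝ) ≤ G.priceComplexity by exact_mod_cast h,
      show (2 : ℝ) ≤ G.timeComplexity by exact_mod_cast h']
  · nlinarith [show (4 : ℝ) ≤ G.priceComplexity by exact_mod_cast h,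
      show (3 : ℝ) ≤ G.timeComplexity by exact_mod_cast h']
  · nlinarith [show (⌈4 * lam / mu⌉₊ + 3 : ℝ) ≤ G.timeComplexity by exact_mod_cast h]
end

section
/- If G is a k-rose with k ≥ 2, then π(G) = 4. -/
open scoped Classical

open Money Money.Digraph

/-!
In a rose every vertex other than the center `c` has a single outgoing edge, so a spanning
`i`-tree has no choice except at `c`, where it must leave along the cycle through `i`. Hence
every price is a monomial, and an edge is influential for `p_i / p_j` exactly when it lies in
one of the two trees but not the other. Each of the differences `T_i \ T_j`, `T_j \ T_i` consists of at most one edge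
leaving `j` (resp. `i`) and one leaving `c`, so `π ≤ 4`; for the successors of `c` on two
different cycles all four edges occur.
-/

open scoped symmDiff

namespace Relation.ReflTransGen

variable {α : Type*} {r : α → α → Prop} {a b : α}

theorem avoiding_target (h : ReflTransGen r a b) :
    ReflTransGen (fun x y => r x y ∧ x ≠ b) a b := by
  induction h using head_induction_on with
  | refl => exact refl
  | @head x y hxy _ ih =>
    by_cases hx : x = b
    · rw [hx]
    · exact head ⟨hxy, hx⟩ ih

theorem of_closed {p : α → Prop} (hp : ∀ x y, r x y → p x → p y)
    (h : ReflTransGen r a b) (ha : p a) : p b := by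
  induction h with
  | refl => exact ha
  | tail _ hyz ih => exact hp _ _ hyz ih

end Relation.ReflTransGen

namespace Finset

theorem card_symmDiff_eq_add {α : Type*} [DecidableEq α] (s t : Finset α) :
    (s ∆ t).card = (s \ t).card + (t \ s).card :=
  card_union_of_disjoint disjoint_sdiff_sdiff

theorem prod_update_div_prod_update {ι M : Type*} [DecidableEq ι] [CommGroupWithZero M]
    {s t : Finset ι} {e : ι} (he : e ∉ s ∆ t) (f : ι → M) {u v : M} (hu : u ≠ 0)
    (hv : v ≠ 0) :
    (∏ x ∈ s, Function.update f e u x) / ∏ x ∈ t, Function.update f e u x =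
      (∏ x ∈ s, Function.update f e v x) / ∏ x ∈ t, Function.update f e v x := by
  rw [mem_symmDiff] at he
  by_cases hs : e ∈ s
  · have ht : e ∈ t := by tauto
    simp only [prod_update_of_mem hs, prod_update_of_mem ht, mul_div_mul_left _ _ hu,
      mul_div_mul_left _ _ hv]
  · have ht : e ∉ t := by tauto
    simp only [prod_update_of_notMem hs, prod_update_of_notMem ht]

end Finset

namespace Money.Digraph

open Finset Relation

variable {n k : ℕ}

theorem existsUnique_of_outdeg_eq_one {D : Digraph n} {v : Fin n} (h : D.outdeg v = 1) :
    ∃! w, (v, w) ∈ D.edges := by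
  obtain ⟨⟨a, w₀⟩, he⟩ := card_eq_one.mp h
  have key : ∀ e, e ∈ D.edges ∧ e.1 = v ↔ e = (a, w₀) := fun e => by
    simpa only [mem_filter, mem_singleton] using Finset.ext_iff.1 he e
  obtain rfl : a = v := ((key _).2 rfl).2
  exact ⟨w₀, ((key _).2 rfl).1,
    fun w hw => (Prod.ext_iff.1 ((key (a, w)).1 ⟨hw, rfl⟩)).2⟩

theorem IsCycleGraph.existsUnique_edge {D : Digraph n} (hD : D.IsCycleGraph) {v : Fin n}
    (hv : v ∈ D.verts) : ∃! w, (v, w) ∈ D.edges :=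
  existsUnique_of_outdeg_eq_one (hD.2 v hv).1

theorem IsSpanTree.injOn_fst {G : Digraph n} {i : Fin n} {T : Finset (Fin n × Fin n)}
    (hT : G.IsSpanTree i T) : Set.InjOn Prod.fst (T : Set (Fin n × Fin n)) := by
  rintro ⟨a, b⟩ hab ⟨a', b'⟩ hab' (rfl : a = a')
  have hai : a ≠ i := by rintro rfl; exact hT.2.2.1 b hab
  exact Prod.ext rfl ((hT.2.1 a (G.mem_verts _ (hT.1 hab)).1 hai).unique hab hab')

theorem influential_priceRatio_iff {G : Digraph n} {i j : Fin n}
    {S T : Finset (Fin n × Fin n)} (hi : ∀ b, G.price i b = ∏ e ∈ S, b e)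
    (hj : ∀ b, G.price j b = ∏ e ∈ T, b e) {e : Fin n × Fin n} (he : e ∈ G.edges) :
    G.Influential (G.priceRatio i j) e ↔ e ∈ S ∆ T := by
  simp only [Influential, priceRatio, hi, hj]
  constructor
  · rintro ⟨b, b', hb, hb', hbb', hne⟩
    by_contra heST
    have hb'_eq : b' = Function.update b e (b' e) := by
      ext x
      by_cases hx : x = e
      · rw [hx, Function.update_self]
      · rw [Function.update_of_ne hx, hbb' x hx]
    rw [← Function.update_eq_self e b, hb'_eq] at hne
    exact hne (prod_update_div_prod_update heST b (hb e he).ne' (hb' e he).ne')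
  · intro heST
    refine ⟨1, Function.update 1 e 2, fun _ _ => one_pos, fun x _ => ?_, fun x hx => ?_, ?_⟩
    · rw [Function.update_apply]; split_ifs <;> norm_num
    · rw [Function.update_of_ne hx]
    · rcases mem_symmDiff.1 heST with ⟨hS, hT⟩ | ⟨hT, hS⟩ <;>
        simp [prod_update_of_mem, prod_update_of_notMem, hS, hT]

theorem priceCplxPair_eq_card_symmDiff {G : Digraph n} {i j : Fin n}
    {S T : Finset (Fin n × Fin n)} (hi : ∀ b, G.price i b = ∏ e ∈ S, b e)
    (hj : ∀ b, G.price j b = ∏ e ∈ T, b e) (hS : S ⊆ G.edges) (hT : T ⊆ G.edges) :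
    G.priceCplxPair i j = (S ∆ T).card := by
  rw [priceCplxPair]
  congr 1
  ext e
  rw [mem_filter]
  exact ⟨fun ⟨he, h⟩ => (influential_priceRatio_iff hi hj he).1 h,
    fun h => ⟨union_subset hS hT (symmDiff_subset_union h),
      (influential_priceRatio_iff hi hj (union_subset hS hT (symmDiff_subset_union h))).2 h⟩⟩

structure IsRoseAt (G : Digraph n) (c : Fin n) (C : Fin k → Digraph n) : Prop where
  isCycleGraph : ∀ l, (C l).IsCycleGraph
  center_mem : ∀ l, c ∈ (C l).verts
  inter_verts : ∀ l l', l ≠ l' → (C l).verts ∩ (C l').verts = {c}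
  verts_eq : G.verts = insert c (univ.biUnion fun l => (C l).verts)
  edges_eq : G.edges = univ.biUnion fun l => (C l).edges

theorem IsRose.exists_isRoseAt {G : Digraph n} (hG : G.IsRose k) :
    ∃ c, ∃ C : Fin k → Digraph n, G.IsRoseAt c C :=
  let ⟨c, C, h₁, h₂, h₃, h₄, h₅⟩ := hG
  ⟨c, C, h₁, h₂, h₃, h₄, h₅⟩

def roseSpanTree (G D : Digraph n) (c i : Fin n) : Finset (Fin n × Fin n) :=
  G.edges.filter fun e => e.1 ≠ i ∧ (e.1 = c → e ∈ D.edges)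

theorem fst_eq_of_mem_roseSpanTree_sdiff {G D D' : Digraph n} {c i j : Fin n}
    {e : Fin n × Fin n} (he : e ∈ roseSpanTree G D c i \ roseSpanTree G D' c j) :
    e.1 = j ∨ e.1 = c := by
  simp only [roseSpanTree, mem_sdiff, mem_filter, not_and] at he
  tauto

namespace IsRoseAt

variable {G : Digraph n} {c : Fin n} {C : Fin k → Digraph n} (hG : G.IsRoseAt c C)
include hG

theorem edges_subset (l : Fin k) : (C l).edges ⊆ G.edges := by
  rw [hG.edges_eq]
  exact subset_biUnion_of_mem (fun l => (C l).edges) (mem_univ l)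

theorem exists_mem_edges {e : Fin n × Fin n} (he : e ∈ G.edges) : ∃ l, e ∈ (C l).edges := by
  simpa [hG.edges_eq] using he

theorem mem_verts (l : Fin k) {v : Fin n} (hv : v ∈ (C l).verts) : v ∈ G.verts := by
  rw [hG.verts_eq]
  exact mem_insert_of_mem (mem_biUnion.2 ⟨l, mem_univ l, hv⟩)

theorem exists_mem_verts (hk : 0 < k) {v : Fin n} (hv : v ∈ G.verts) :
    ∃ l, v ∈ (C l).verts := by
  rw [hG.verts_eq, mem_insert, mem_biUnion] at hv
  rcases hv with rfl | ⟨l, -, hl⟩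
  · exact ⟨⟨0, hk⟩, hG.center_mem _⟩
  · exact ⟨l, hl⟩

theorem eq_center_of_mem_of_mem {l l' : Fin k} (hll' : l ≠ l') {v : Fin n}
    (hv : v ∈ (C l).verts) (hv' : v ∈ (C l').verts) : v = c := by
  simpa [hG.inter_verts l l' hll'] using mem_inter.2 ⟨hv, hv'⟩

theorem eq_of_mem_edges_of_mem_edges {l l' : Fin k} {e : Fin n × Fin n}
    (he : e ∈ (C l).edges) (he' : e ∈ (C l').edges) : l = l' := by
  by_contra hll'
  have h₁ := hG.eq_center_of_mem_of_mem hll' ((C l).mem_verts e he).1 ((C l').mem_verts e he').1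
  have h₂ := hG.eq_center_of_mem_of_mem hll' ((C l).mem_verts e he).2 ((C l').mem_verts e he').2
  exact (C l).no_loops e he (h₁.trans h₂.symm)

theorem mem_edges_iff {l : Fin k} {v w : Fin n} (hv : v ∈ (C l).verts) (hvc : v ≠ c) :
    (v, w) ∈ G.edges ↔ (v, w) ∈ (C l).edges := by
  refine ⟨fun h => ?_, fun h => hG.edges_subset l h⟩
  obtain ⟨l', hl'⟩ := hG.exists_mem_edges h
  obtain rfl : l' = l := by
    by_contra hne
    exact hvc (hG.eq_center_of_mem_of_mem hne ((C l').mem_verts _ hl').1 hv)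
  exact hl'

theorem existsUnique_edge {l : Fin k} {v : Fin n} (hv : v ∈ (C l).verts) (hvc : v ≠ c) :
    ∃! w, (v, w) ∈ G.edges := by
  simpa only [hG.mem_edges_iff hv hvc] using (hG.isCycleGraph l).existsUnique_edge hv

theorem ne_of_center_edges {l l' : Fin k} (hll' : l ≠ l') {i i' : Fin n}
    (hi : (c, i) ∈ (C l).edges) (hi' : (c, i') ∈ (C l').edges) : i ≠ i' := by
  rintro rfl
  exact (C l).no_loops _ hi
    (hG.eq_center_of_mem_of_mem hll' ((C l).mem_verts _ hi).2 ((C l').mem_verts _ hi').2).symm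

section SpanTree

variable {l : Fin k} {i : Fin n} (hi : i ∈ (C l).verts)
include hi

theorem isSpanTree_roseSpanTree : G.IsSpanTree i (roseSpanTree G (C l) c i) := by
  have reaches_of_mem : ∀ u ∈ (C l).verts,
      ReflTransGen (fun a b => (a, b) ∈ roseSpanTree G (C l) c i) u i := fun u hu =>
    ReflTransGen.mono
      (fun a b ⟨hab, hai⟩ => mem_filter.2 ⟨hG.edges_subset l hab, hai, fun _ => hab⟩) _ _
      ((hG.isCycleGraph l).1.2 u hu i hi).avoiding_target
  refine ⟨filter_subset _ _, fun j hj hji => ?_, fun j h => (mem_filter.1 h).2.1 rfl,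
    fun j hj => ?_⟩
  · by_cases hjc : j = c
    · subst hjc
      obtain ⟨w, hw, hwu⟩ := (hG.isCycleGraph l).existsUnique_edge (hG.center_mem l)
      exact ⟨w, mem_filter.2 ⟨hG.edges_subset l hw, hji, fun _ => hw⟩,
        fun w' hw' => hwu w' ((mem_filter.1 hw').2.2 rfl)⟩
    · obtain ⟨m, hm⟩ := hG.exists_mem_verts l.pos hj
      obtain ⟨w, hw, hwu⟩ := hG.existsUnique_edge hm hjc
      exact ⟨w, mem_filter.2 ⟨hw, hji, fun h => absurd h hjc⟩,
        fun w' hw' => hwu w' (mem_filter.1 hw').1⟩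
  · obtain ⟨m, hm⟩ := hG.exists_mem_verts l.pos hj
    obtain rfl | hml := eq_or_ne m l
    · exact reaches_of_mem j hm
    refine ReflTransGen.trans (ReflTransGen.mono ?_ _ _
      ((hG.isCycleGraph m).1.2 j hm c (hG.center_mem m)).avoiding_target)
      (reaches_of_mem c (hG.center_mem l))
    rintro a b ⟨hab, hac⟩
    refine mem_filter.2 ⟨hG.edges_subset m hab, ?_, fun h => absurd h hac⟩
    rintro rfl
    exact hac (hG.eq_center_of_mem_of_mem hml ((C m).mem_verts _ hab).1 hi)

theorem mem_edges_of_isSpanTree {T : Finset (Fin n × Fin n)} (hT : G.IsSpanTree i T)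
    (hci : c ≠ i) {x : Fin n} (hcx : (c, x) ∈ T) : (c, x) ∈ (C l).edges := by
  obtain ⟨m, hm⟩ := hG.exists_mem_edges (hT.1 hcx)
  obtain rfl | hml := eq_or_ne m l
  · exact hm
  exfalso
  -- `T` leaves `c` into the cycle `C m`, so `T`-paths from `c` never leave `C m`
  have closed : ∀ a b, (a, b) ∈ T → a ∈ (C m).verts → b ∈ (C m).verts := by
    intro a b hab ha
    by_cases hac : a = c
    · subst hac
      obtain ⟨w, -, hwu⟩ := hT.2.1 a (hG.mem_verts m ha) hci
      rw [hwu b hab, ← hwu x hcx]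
      exact ((C m).mem_verts _ hm).2
    · exact ((C m).mem_verts _ ((hG.mem_edges_iff ha hac).1 (hT.1 hab))).2
  have him : i ∈ (C m).verts :=
    (hT.2.2.2 c (hG.mem_verts m (hG.center_mem m))).of_closed closed (hG.center_mem m)
  exact hci (hG.eq_center_of_mem_of_mem hml him hi).symm

theorem eq_roseSpanTree_of_isSpanTree {T : Finset (Fin n × Fin n)} (hT : G.IsSpanTree i T) :
    T = roseSpanTree G (C l) c i := by
  ext ⟨a, b⟩
  simp only [roseSpanTree, mem_filter]
  constructor
  · intro hab
    have hai : a ≠ i := by rintro rfl; exact hT.2.2.1 b hab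
    refine ⟨hT.1 hab, hai, ?_⟩
    rintro rfl
    exact hG.mem_edges_of_isSpanTree hi hT hai hab
  · rintro ⟨habG, hai, habC⟩
    obtain ⟨w, hw, -⟩ := hT.2.1 a (G.mem_verts _ habG).1 hai
    suffices b = w by rwa [this]
    by_cases hac : a = c
    · subst hac
      exact ((hG.isCycleGraph l).existsUnique_edge (hG.center_mem l)).unique (habC rfl)
        (hG.mem_edges_of_isSpanTree hi hT hai hw)
    · obtain ⟨m, hm⟩ := hG.exists_mem_verts l.pos (G.mem_verts _ habG).1
      exact (hG.existsUnique_edge hm hac).unique habG (hT.1 hw)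

theorem price_eq_prod (b : Fin n × Fin n → ℝ) :
    G.price i b = ∏ e ∈ roseSpanTree G (C l) c i, b e := by
  have htrees : G.edges.powerset.filter (fun T => G.IsSpanTree i T) =
      {roseSpanTree G (C l) c i} := by
    ext T
    simp only [mem_filter, mem_powerset, mem_singleton]
    exact ⟨fun h => hG.eq_roseSpanTree_of_isSpanTree hi h.2,
      by rintro rfl; exact ⟨filter_subset _ _, hG.isSpanTree_roseSpanTree hi⟩⟩
  rw [price, htrees, sum_singleton]

theorem card_roseSpanTree_sdiff_le_two (l' : Fin k) (i' : Fin n) :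
    (roseSpanTree G (C l) c i \ roseSpanTree G (C l') c i').card ≤ 2 :=
  calc _ ≤ ({i', c} : Finset (Fin n)).card :=
        card_le_card_of_injOn Prod.fst
          (fun e he => by simpa using fst_eq_of_mem_roseSpanTree_sdiff he)
          ((hG.isSpanTree_roseSpanTree hi).injOn_fst.mono (coe_subset.2 sdiff_subset))
    _ ≤ 2 := card_le_two

end SpanTree

theorem two_le_card_roseSpanTree_sdiff {l l' : Fin k} (hll' : l ≠ l') {i i' w : Fin n}
    (hi : (c, i) ∈ (C l).edges) (hi' : (c, i') ∈ (C l').edges)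
    (hw : (i', w) ∈ (C l').edges) :
    2 ≤ (roseSpanTree G (C l) c i \ roseSpanTree G (C l') c i').card := by
  have hci : c ≠ i := (C l).no_loops _ hi
  have hci' : c ≠ i' := (C l').no_loops _ hi'
  have hii' := hG.ne_of_center_edges hll' hi hi'
  have hi_off : (c, i) ∉ (C l').edges := fun h => hll' (hG.eq_of_mem_edges_of_mem_edges hi h)
  have hsub : {(i', w), (c, i)} ⊆ roseSpanTree G (C l) c i \ roseSpanTree G (C l') c i' := by
    simp [insert_subset_iff, roseSpanTree, hG.edges_subset l' hw, hG.edges_subset l hi, hi,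
      hi_off, hii'.symm, hci, hci'.symm]
  calc 2 = ({(i', w), (c, i)} : Finset (Fin n × Fin n)).card :=
        (card_pair (by simp [hci'.symm])).symm
    _ ≤ _ := card_le_card hsub

theorem priceCplxPair_eq {l l' : Fin k} {i i' : Fin n} (hi : i ∈ (C l).verts)
    (hi' : i' ∈ (C l').verts) :
    G.priceCplxPair i i' = (roseSpanTree G (C l) c i \ roseSpanTree G (C l') c i').card +
      (roseSpanTree G (C l') c i' \ roseSpanTree G (C l) c i).card := by
  rw [priceCplxPair_eq_card_symmDiff (hG.price_eq_prod hi) (hG.price_eq_prod hi')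
    (filter_subset _ _) (filter_subset _ _), card_symmDiff_eq_add]

theorem priceCplxPair_le_four (hk : 0 < k) {i j : Fin n} (hi : i ∈ G.verts)
    (hj : j ∈ G.verts) : G.priceCplxPair i j ≤ 4 := by
  obtain ⟨l, hl⟩ := hG.exists_mem_verts hk hi
  obtain ⟨l', hl'⟩ := hG.exists_mem_verts hk hj
  rw [hG.priceCplxPair_eq hl hl']
  have := hG.card_roseSpanTree_sdiff_le_two hl l' j
  have := hG.card_roseSpanTree_sdiff_le_two hl' l i
  omega

theorem exists_four_le_priceCplxPair {l₀ l₁ : Fin k} (hl : l₀ ≠ l₁) :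
    ∃ i j, i ∈ G.verts ∧ j ∈ G.verts ∧ i ≠ j ∧ 4 ≤ G.priceCplxPair i j := by
  obtain ⟨i₀, hi₀, -⟩ := (hG.isCycleGraph l₀).existsUnique_edge (hG.center_mem l₀)
  obtain ⟨i₁, hi₁, -⟩ := (hG.isCycleGraph l₁).existsUnique_edge (hG.center_mem l₁)
  have hv₀ : i₀ ∈ (C l₀).verts := ((C l₀).mem_verts _ hi₀).2
  have hv₁ : i₁ ∈ (C l₁).verts := ((C l₁).mem_verts _ hi₁).2
  obtain ⟨w₀, hw₀, -⟩ := (hG.isCycleGraph l₀).existsUnique_edge hv₀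
  obtain ⟨w₁, hw₁, -⟩ := (hG.isCycleGraph l₁).existsUnique_edge hv₁
  refine ⟨i₀, i₁, hG.mem_verts l₀ hv₀, hG.mem_verts l₁ hv₁,
    hG.ne_of_center_edges hl hi₀ hi₁, ?_⟩
  rw [hG.priceCplxPair_eq hv₀ hv₁]
  have := hG.two_le_card_roseSpanTree_sdiff hl hi₀ hi₁ hw₁
  have := hG.two_le_card_roseSpanTree_sdiff hl.symm hi₁ hi₀ hw₀
  omega

end IsRoseAt

end Money.Digraph

/-- a `k`-rose with `k ≥ 2` has `π(G) = 4`. -/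
theorem stmt7 {n : ℕ} (G : Money.Digraph n) (k : ℕ) (hk : 2 ≤ k)
    (hG : G.IsRose k) :
    G.priceComplexity = 4 := by
  obtain ⟨c, C, hG⟩ := hG.exists_isRoseAt
  obtain ⟨i, j, hi, hj, hij, h₄⟩ := hG.exists_four_le_priceCplxPair
    (l₀ := ⟨0, by omega⟩) (l₁ := ⟨1, by omega⟩) (by simp [Fin.ext_iff])
  rw [priceComplexity]
  refine le_antisymm (Finset.sup_le fun p hp => ?_) (h₄.trans ?_)
  · obtain ⟨hp, -⟩ := Finset.mem_filter.1 hp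
    exact hG.priceCplxPair_le_four (by omega) (Finset.mem_product.1 hp).1
      (Finset.mem_product.1 hp).2
  · exact Finset.le_sup (f := fun p : Fin n × Fin n => G.priceCplxPair p.1 p.2) (b := (i, j))
      (Finset.mem_filter.2 ⟨Finset.mem_product.2 ⟨hi, hj⟩, hij⟩)
end

section
/- If G is a connected directed graph with at least two vertices that is not a directed cycle, then π_ij(G) ≥ 4 for some pair of vertices i ≠ j. -/
open scoped Classical

namespace Stmt8Aux


open Money Money.Digraph Relation Finset

variable {n : ℕ}

/-- A "flow package" towards `v`: every vertex other than `v` has exactly one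
outgoing edge in `F`, and following `F` strictly decreases the rank `ρ`,
so all flows terminate at `v`. -/
structure Pkg (G : Digraph n) (v : Fin n) where
  F : Finset (Fin n × Fin n)
  ρ : Fin n → ℕ
  sub : F ⊆ G.edges
  exist_out : ∀ u ∈ G.verts, u ≠ v → ∃ e ∈ F, e.1 = u
  func : ∀ e ∈ F, ∀ e' ∈ F, e.1 = e'.1 → e = e'
  no_v : ∀ e ∈ F, e.1 ≠ v
  rk : ∀ e ∈ F, ρ e.2 < ρ e.1

def Frel (F : Finset (Fin n × Fin n)) : Fin n → Fin n → Prop := fun x y => (x, y) ∈ F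

/-- From a reachability witness that crosses into `W`, extract a single
crossing edge. -/
lemma exists_entry {G : Digraph n} {W : Finset (Fin n)} {u w : Fin n}
    (h : G.Reaches u w) (hu : u ∉ W) (hw : w ∈ W) :
    ∃ x y, (x, y) ∈ G.edges ∧ x ∉ W ∧ y ∈ W := by
  induction h using Relation.ReflTransGen.head_induction_on with
  | refl => exact absurd hw hu
  | head hstep _ ih =>
    rename_i p c _
    by_cases hc : c ∈ W
    · exact ⟨p, c, hstep, hu, hc⟩
    · exact ih hc

lemma grow_aux (G : Digraph n) (hc : G.Connected) (v : Fin n) (hv : v ∈ G.verts) :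
    ∀ (k : ℕ) (W : Finset (Fin n)) (F : Finset (Fin n × Fin n)) (ρ : Fin n → ℕ),
      (G.verts \ W).card ≤ k → v ∈ W → W ⊆ G.verts → F ⊆ G.edges →
      (∀ u ∈ W, u ≠ v → ∃ e ∈ F, e.1 = u) →
      (∀ e ∈ F, ∀ e' ∈ F, e.1 = e'.1 → e = e') →
      (∀ e ∈ F, e.1 ≠ v ∧ e.1 ∈ W ∧ e.2 ∈ W) →
      (∀ e ∈ F, ρ e.2 < ρ e.1) →
      Nonempty (Pkg G v) := by
  intro k
  induction k with
  | zero =>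
    intro W F ρ hcard hvW hWv hFE hout hfunc hWin hrk
    have hsub : G.verts ⊆ W := by
      intro x hx
      by_contra hxW
      have : x ∈ G.verts \ W := mem_sdiff.mpr ⟨hx, hxW⟩
      have := card_pos.mpr ⟨x, this⟩
      omega
    exact ⟨⟨F, ρ, hFE, fun u hu hne => hout u (hsub hu) hne, hfunc,
      fun e he => (hWin e he).1, hrk⟩⟩
  | succ k ih =>
    intro W F ρ hcard hvW hWv hFE hout hfunc hWin hrk
    by_cases hsub : G.verts ⊆ W
    · exact ⟨⟨F, ρ, hFE, fun u hu hne => hout u (hsub hu) hne, hfunc,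
        fun e he => (hWin e he).1, hrk⟩⟩
    · obtain ⟨u0, hu0v, hu0W⟩ : ∃ u0 ∈ G.verts, u0 ∉ W := by
        by_contra h
        push_neg at h
        exact hsub h
      obtain ⟨x, y, hxy, hxW, hyW⟩ := exists_entry (hc.2 u0 hu0v v hv) hu0W hvW
      have hxV : x ∈ G.verts := (G.mem_verts _ hxy).1
      have hyx : y ≠ x := by
        intro h
        rw [h] at hyW
        exact hxW hyW
      set m := (W.sup ρ) + 1 with hm
      refine ih (insert x W) (insert (x, y) F) (Function.update ρ x m) ?_ ?_ ?_ ?_ ?_ ?_ ?_ ?_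
      · -- card bound
        have h1 : G.verts \ insert x W = (G.verts \ W).erase x := by
          ext z
          simp only [mem_sdiff, mem_insert, mem_erase]
          tauto
        rw [h1, card_erase_of_mem (mem_sdiff.mpr ⟨hxV, hxW⟩)]
        omega
      · exact mem_insert_of_mem hvW
      · intro z hz
        rcases mem_insert.mp hz with h | h
        · subst h; exact hxV
        · exact hWv h
      · intro e he
        rcases mem_insert.mp he with h | h
        · subst h; exact hxy
        · exact hFE h
      · intro u hu hne
        rcases mem_insert.mp hu with h | h
        · exact ⟨(x, y), mem_insert_self _ _, h.symm⟩
        · obtain ⟨e, he, he1⟩ := hout u h hne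
          exact ⟨e, mem_insert_of_mem he, he1⟩
      · intro e he e' he' h1
        rcases mem_insert.mp he with h | h <;> rcases mem_insert.mp he' with h' | h'
        · rw [h, h']
        · exfalso; subst h
          have := (hWin e' h').2.1
          rw [← h1] at this
          exact hxW this
        · exfalso; subst h'
          have := (hWin e h).2.1
          rw [h1] at this
          exact hxW this
        · exact hfunc e h e' h' h1
      · intro e he
        rcases mem_insert.mp he with h | h
        · subst h
          refine ⟨fun hxv => ?_, mem_insert_self _ _, mem_insert_of_mem hyW⟩
          have : x = v := hxv
          rw [this] at hxW
          exact hxW hvW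
        · exact ⟨(hWin e h).1, mem_insert_of_mem (hWin e h).2.1, mem_insert_of_mem (hWin e h).2.2⟩
      · intro e he
        rcases mem_insert.mp he with h | h
        · subst h
          simp only [Function.update_self]
          rw [Function.update_of_ne hyx]
          have : ρ y ≤ W.sup ρ := le_sup hyW
          omega
        · have h1 : e.1 ≠ x := fun hh => hxW (hh ▸ (hWin e h).2.1)
          have h2 : e.2 ≠ x := fun hh => hxW (hh ▸ (hWin e h).2.2)
          rw [Function.update_of_ne h1, Function.update_of_ne h2]
          exact hrk e h

lemma grow (G : Digraph n) (hc : G.Connected) (v : Fin n) (hv : v ∈ G.verts) :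
    Nonempty (Pkg G v) := by
  refine grow_aux G hc v hv (G.verts \ {v}).card {v} ∅ (fun _ => 0) ?_ ?_ ?_ ?_ ?_ ?_ ?_ ?_
  · exact le_refl _
  · exact mem_singleton_self v
  · intro x hx; rw [mem_singleton] at hx; subst hx; exact hv
  · exact empty_subset _
  · intro u hu hne; rw [mem_singleton] at hu; exact absurd hu hne
  · intro e he; exact absurd he (notMem_empty e)
  · intro e he; exact absurd he (notMem_empty e)
  · intro e he; exact absurd he (notMem_empty e)

namespace Pkg

variable {G : Digraph n} {v : Fin n} (P : Pkg G v)

lemma reach_v : ∀ u ∈ G.verts, ReflTransGen (Frel P.F) u v := by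
  intro u hu
  generalize hgen : P.ρ u = N
  induction N using Nat.strong_induction_on generalizing u with
  | _ N ih =>
    by_cases huv : u = v
    · subst huv; exact ReflTransGen.refl
    · obtain ⟨e, he, he1⟩ := P.exist_out u hu huv
      have hrk := P.rk e he
      have hE := P.sub he
      have h2v : e.2 ∈ G.verts := (G.mem_verts e hE).2
      have hstep : Frel P.F u e.2 := by
        show (u, e.2) ∈ P.F
        rwa [← he1, Prod.mk.eta]
      subst hgen
      exact ReflTransGen.head hstep (ih (P.ρ e.2) (he1 ▸ hrk) e.2 h2v rfl)

lemma rtg_rank {p q : Fin n} (h : ReflTransGen (Frel P.F) p q) : P.ρ q ≤ P.ρ p := by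
  induction h with
  | refl => exact le_refl _
  | tail _ hstep ih => exact le_trans (le_of_lt (P.rk _ hstep)) ih

lemma rtg_lt {p q : Fin n} (h : ReflTransGen (Frel P.F) p q) (hne : p ≠ q) :
    P.ρ q < P.ρ p := by
  rcases (Relation.ReflTransGen.cases_head h) with heq | ⟨c, hstep, htail⟩
  · exact absurd heq hne
  · exact lt_of_le_of_lt (P.rtg_rank htail) (P.rk _ hstep)

lemma antisym {p q : Fin n} (h1 : ReflTransGen (Frel P.F) p q)
    (h2 : ReflTransGen (Frel P.F) q p) : p = q := by
  by_contra hne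
  exact absurd (lt_trans (P.rtg_lt h1 hne) (P.rtg_lt h2 (Ne.symm hne))) (lt_irrefl _)

end Pkg


namespace Pkg
section Trees

variable {G : Digraph n} {v : Fin n} (P : Pkg G v)

/-- The spanning subgraph: the flow `F` plus the two out-edges of `v`. -/
def KE (P : Pkg G v) (a b : Fin n) : Finset (Fin n × Fin n) :=
  insert (v, a) (insert (v, b) P.F)

/-- The candidate spanning tree with root `x`, where `v` uses the edge `γ`. -/
def Tx (P : Pkg G v) (x : Fin n) (γ : Fin n × Fin n) : Finset (Fin n × Fin n) :=
  insert γ (P.F.filter fun e => e.1 ≠ x)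

lemma mem_Tx {x : Fin n} {γ e : Fin n × Fin n} :
    e ∈ P.Tx x γ ↔ e = γ ∨ (e ∈ P.F ∧ e.1 ≠ x) := by
  simp [Tx, mem_filter, and_assoc]

lemma mem_KE {a b : Fin n} {e : Fin n × Fin n} :
    e ∈ P.KE a b ↔ e = (v, a) ∨ e = (v, b) ∨ e ∈ P.F := by
  simp [KE]

lemma tx_subset_KE {a b x : Fin n} {γ : Fin n × Fin n}
    (hγ : γ = (v, a) ∨ γ = (v, b)) : P.Tx x γ ⊆ P.KE a b := by
  intro e he
  rcases (P.mem_Tx).mp he with h | h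
  · subst h
    exact (P.mem_KE).mpr (by tauto)
  · exact (P.mem_KE).mpr (Or.inr (Or.inr h.1))

lemma tx_subset_edges {x : Fin n} {γ : Fin n × Fin n} (hγ : γ ∈ G.edges) :
    P.Tx x γ ⊆ G.edges := by
  intro e he
  rcases (P.mem_Tx).mp he with h | h
  · exact h ▸ hγ
  · exact P.sub h.1

/-- Lift an `F`-flow to a `Tx`-path (edges at the root are never needed). -/
lemma rtg_tx {x : Fin n} {γ : Fin n × Fin n} :
    ∀ {p : Fin n}, ReflTransGen (Frel P.F) p x →
      ReflTransGen (fun s t => (s, t) ∈ P.Tx x γ) p x := by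
  intro p h
  induction h using Relation.ReflTransGen.head_induction_on with
  | refl => exact ReflTransGen.refl
  | head hstep _ ih =>
    rename_i s c _
    by_cases hs : s = x
    · subst hs; exact ReflTransGen.refl
    · exact ReflTransGen.head ((P.mem_Tx).mpr (Or.inr ⟨hstep, hs⟩)) ih

lemma isSpanTree_tx {x : Fin n} (hx : x ∈ G.verts) (hxv : x ≠ v)
    {γ : Fin n × Fin n} (hγE : γ ∈ G.edges) (hγ1 : γ.1 = v)
    (horb : ReflTransGen (Frel P.F) γ.2 x) :
    G.IsSpanTree x (P.Tx x γ) := by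
  have hγeta : ((v : Fin n), γ.2) = γ := by rw [← hγ1]
  refine ⟨P.tx_subset_edges hγE, ?_, ?_, ?_⟩
  · -- unique out-edge for each non-root vertex
    intro u hu hne
    by_cases huv : u = v
    · subst huv
      refine ⟨γ.2, (P.mem_Tx).mpr (Or.inl hγeta), ?_⟩
      intro k hk
      rcases (P.mem_Tx).mp hk with h | h
      · exact congrArg Prod.snd h
      · exact absurd rfl (P.no_v _ h.1)
    · obtain ⟨e, he, he1⟩ := P.exist_out u hu huv
      have heF : (u, e.2) ∈ P.F := by rwa [← he1, Prod.mk.eta]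
      refine ⟨e.2, (P.mem_Tx).mpr (Or.inr ⟨heF, hne⟩), ?_⟩
      intro k hk
      rcases (P.mem_Tx).mp hk with h | h
      · exfalso
        apply huv
        have := congrArg Prod.fst h
        simpa [hγ1] using this
      · exact congrArg Prod.snd (P.func _ h.1 _ heF rfl)
  · -- no out-edge at the root
    intro k hk
    rcases (P.mem_Tx).mp hk with h | h
    · apply hxv
      have := congrArg Prod.fst h
      simpa [hγ1] using this
    · exact h.2 rfl
  · -- reachability
    intro u hu
    generalize hgen : P.ρ u = N
    induction N using Nat.strong_induction_on generalizing u with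
    | _ N ih =>
      by_cases hux : u = x
      · subst hux; exact ReflTransGen.refl
      · by_cases huv : u = v
        · subst huv
          exact ReflTransGen.head
            ((P.mem_Tx).mpr (Or.inl hγeta)) (P.rtg_tx horb)
        · obtain ⟨e, he, he1⟩ := P.exist_out u hu huv
          have heF : (u, e.2) ∈ P.F := by rwa [← he1, Prod.mk.eta]
          have hrk : P.ρ e.2 < P.ρ u := by
            have := P.rk e he
            rwa [he1] at this
          have h2v : e.2 ∈ G.verts := (G.mem_verts e (P.sub he)).2
          refine ReflTransGen.head ((P.mem_Tx).mpr (Or.inr ⟨heF, hux⟩)) ?_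
          subst hgen
          exact ih (P.ρ e.2) hrk e.2 h2v rfl

/-- In a tree of the form `Tx x γ`, anything reachable to `x` forces the
head of `γ` to flow to `x` (used for necessity of the orbit condition). -/
lemma rtg_tx_inv {x : Fin n} (hxv : x ≠ v) {γ : Fin n × Fin n} (hγ1 : γ.1 = v) :
    ∀ {p : Fin n}, ReflTransGen (fun s t => (s, t) ∈ P.Tx x γ) p x →
      (ReflTransGen (Frel P.F) γ.2 p ∨ p = v) →
      ReflTransGen (Frel P.F) γ.2 x := by
  intro p h
  induction h using Relation.ReflTransGen.head_induction_on with
  | refl =>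
    intro hQ
    rcases hQ with h | h
    · exact h
    · exact absurd h hxv
  | head hstep _ ih =>
    rename_i s c _
    intro hQ
    rcases (P.mem_Tx).mp hstep with h | h
    · -- the step is γ itself, so s = v and c = γ.2
      have hc : c = γ.2 := congrArg Prod.snd h
      exact ih (Or.inl (hc ▸ ReflTransGen.refl))
    · -- an F-step
      rcases hQ with hQ | hQ
      · exact ih (Or.inl (hQ.tail h.1))
      · exfalso
        exact P.no_v _ h.1 (by rw [hQ])

/-- Any spanning `x`-tree contained in `KE` is one of the two candidates,
and its `v`-edge head must flow to `x`. -/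
lemma classify {a b x : Fin n} (hab : a ≠ b) (hvV : v ∈ G.verts)
    (hx : x ∈ G.verts) (hxv : x ≠ v)
    {T : Finset (Fin n × Fin n)} (hTsub : T ⊆ P.KE a b) (hT : G.IsSpanTree x T) :
    (T = P.Tx x (v, a) ∧ ReflTransGen (Frel P.F) a x) ∨
    (T = P.Tx x (v, b) ∧ ReflTransGen (Frel P.F) b x) := by
  obtain ⟨hTE, huniq, hroot, hreach⟩ := hT
  obtain ⟨k, hk, hkuniq⟩ := huniq v hvV (Ne.symm hxv)
  have hkab : k = a ∨ k = b := by
    rcases (P.mem_KE).mp (hTsub hk) with h | h | h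
    · exact Or.inl (congrArg Prod.snd h)
    · exact Or.inr (congrArg Prod.snd h)
    · exact absurd rfl (P.no_v _ h)
  have key : ∀ c : Fin n, (v, c) ∈ T → T = P.Tx x (v, c) ∧
      ReflTransGen (Frel P.F) c x := by
    intro c hc
    have hTeq : T = P.Tx x (v, c) := by
      apply Finset.Subset.antisymm
      · intro e he
        rcases (P.mem_KE).mp (hTsub he) with h | h | h
        · subst h
          have : a = k := hkuniq a he
          have hck : c = k := hkuniq c hc
          rw [(P.mem_Tx)]
          exact Or.inl (by rw [this, hck])
        · subst h
          have : b = k := hkuniq b he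
          have hck : c = k := hkuniq c hc
          rw [(P.mem_Tx)]
          exact Or.inl (by rw [this, hck])
        · refine (P.mem_Tx).mpr (Or.inr ⟨h, ?_⟩)
          intro h1
          apply hroot e.2
          have h4 : (e.1, e.2) ∈ T := he
          rwa [h1] at h4
      · intro e he
        rcases (P.mem_Tx).mp he with h | h
        · exact h ▸ hc
        · -- an F-edge with tail ≠ x must be in T by uniqueness at its tail
          obtain ⟨hF, hne⟩ := h
          have h1V : e.1 ∈ G.verts := (G.mem_verts _ (P.sub hF)).1
          obtain ⟨k', hk', hk'uniq⟩ := huniq e.1 h1V hne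
          have hk'KE := hTsub hk'
          rcases (P.mem_KE).mp hk'KE with h' | h' | h'
          · exfalso
            exact P.no_v _ hF (congrArg Prod.fst h')
          · exfalso
            exact P.no_v _ hF (congrArg Prod.fst h')
          · have heF : (e.1, e.2) ∈ P.F := hF
            have h2 : (e.1, k') = (e.1, e.2) := P.func _ h' _ heF rfl
            have h3 := hk'
            rw [h2] at h3
            exact h3
    refine ⟨hTeq, ?_⟩
    have hvreach := hreach v hvV
    rw [hTeq] at hvreach
    exact P.rtg_tx_inv hxv rfl hvreach (Or.inr rfl)
  rcases hkab with h | h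
  · subst h; exact Or.inl (key _ hk)
  · subst h; exact Or.inr (key _ hk)

end Trees
end Pkg




/-- The weight function: `xv` on the distinguished edge `e0`, `1` on the other
edges of `KEs`, and `ε` elsewhere. -/
def wf (KEs : Finset (Fin n × Fin n)) (e0 : Fin n × Fin n) (xv ε : ℝ) :
    (Fin n × Fin n) → ℝ :=
  fun e' => if e' = e0 then xv else if e' ∈ KEs then 1 else ε

lemma wf_pos {KEs : Finset (Fin n × Fin n)} {e0 : Fin n × Fin n} {xv ε : ℝ}
    (hxv : 0 < xv) (hε : 0 < ε) (e' : Fin n × Fin n) : 0 < wf KEs e0 xv ε e' := by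
  unfold wf
  split
  · exact hxv
  · split
    · exact one_pos
    · exact hε

lemma prod_wf_of_subset {KEs : Finset (Fin n × Fin n)} {e0 : Fin n × Fin n}
    {xv ε : ℝ} {T : Finset (Fin n × Fin n)} (hT : T ⊆ KEs) :
    (∏ e' ∈ T, wf KEs e0 xv ε e') = if e0 ∈ T then xv else 1 := by
  have h1 : (∏ e' ∈ T, wf KEs e0 xv ε e') = ∏ e' ∈ T, (if e' = e0 then xv else 1) := by
    refine Finset.prod_congr rfl ?_
    intro e' he'
    unfold wf
    by_cases h : e' = e0
    · simp [h]
    · simp [h, hT he']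
  rw [h1, Finset.prod_ite_eq' T e0 (fun _ => xv)]

lemma prod_wf_small {KEs : Finset (Fin n × Fin n)} {e0 : Fin n × Fin n}
    {xv ε : ℝ} {T : Finset (Fin n × Fin n)} (hnot : ¬ T ⊆ KEs) (he0 : e0 ∈ KEs)
    (hxv0 : 0 < xv) (hxv2 : xv ≤ 2) (hε0 : 0 < ε) (hε1 : ε ≤ 1) :
    0 ≤ (∏ e' ∈ T, wf KEs e0 xv ε e') ∧ (∏ e' ∈ T, wf KEs e0 xv ε e') ≤ 2 * ε := by
  have hnn : ∀ e' ∈ T, 0 ≤ wf KEs e0 xv ε e' :=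
    fun e' _ => le_of_lt (wf_pos hxv0 hε0 e')
  constructor
  · exact Finset.prod_nonneg hnn
  · obtain ⟨e1, he1T, he1K⟩ := Finset.not_subset.mp hnot
    have he1ne : e1 ≠ e0 := fun h => he1K (h ▸ he0)
    have hw1 : wf KEs e0 xv ε e1 = ε := by
      unfold wf
      simp [he1ne, he1K]
    rw [← Finset.mul_prod_erase T _ he1T, hw1]
    have hb1 : (∏ e' ∈ T.erase e1, wf KEs e0 xv ε e') ≤
        ∏ e' ∈ T.erase e1, (if e' = e0 then 2 else 1 : ℝ) := by
      refine Finset.prod_le_prod (fun e' _ => le_of_lt (wf_pos hxv0 hε0 e')) ?_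
      intro e' _
      unfold wf
      by_cases h : e' = e0
      · simp [h, hxv2]
      · simp only [h, if_false]
        split
        · norm_num
        · linarith
    have hb2 : (∏ e' ∈ T.erase e1, (if e' = e0 then 2 else 1 : ℝ)) ≤ 2 := by
      rw [Finset.prod_ite_eq' (T.erase e1) e0 (fun _ => (2:ℝ))]
      split
      · norm_num
      · norm_num
    calc ε * (∏ e' ∈ T.erase e1, wf KEs e0 xv ε e')
        ≤ ε * 2 := by
          refine mul_le_mul_of_nonneg_left (le_trans hb1 hb2) (le_of_lt hε0)
      _ = 2 * ε := by ring

lemma price_pos {G : Digraph n} {x : Fin n} {w : (Fin n × Fin n) → ℝ}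
    (hw : ∀ e', 0 < w e') {T : Finset (Fin n × Fin n)}
    (hT : G.IsSpanTree x T) : 0 < G.price x w := by
  unfold Money.Digraph.price
  refine Finset.sum_pos ?_ ⟨T, ?_⟩
  · intro T' _
    exact Finset.prod_pos (fun e' _ => hw e')
  · exact Finset.mem_filter.mpr ⟨Finset.mem_powerset.mpr hT.1, hT⟩

/-- Decomposition of the price: explicit part over the trees inside `KEs`,
plus an error term of size `O(ε)`. -/
lemma price_form {G : Digraph n} {x : Fin n} {KEs : Finset (Fin n × Fin n)}
    {e0 : Fin n × Fin n} (he0 : e0 ∈ KEs) {S0 : Finset (Finset (Fin n × Fin n))}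
    (hS0 : (G.edges.powerset.filter (fun T => G.IsSpanTree x T)).filter
      (fun T => T ⊆ KEs) = S0)
    {xv ε : ℝ} (hxv0 : 0 < xv) (hxv2 : xv ≤ 2) (hε0 : 0 < ε) (hε1 : ε ≤ 1) :
    ∃ r : ℝ, G.price x (wf KEs e0 xv ε) =
      (∑ T ∈ S0, if e0 ∈ T then xv else 1) + r ∧
      0 ≤ r ∧ r ≤ (G.edges.powerset.card : ℝ) * (2 * ε) := by
  classical
  set S := G.edges.powerset.filter (fun T => G.IsSpanTree x T) with hS
  have hsplit : G.price x (wf KEs e0 xv ε) =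
      (∑ T ∈ S.filter (fun T => T ⊆ KEs), ∏ e' ∈ T, wf KEs e0 xv ε e') +
      (∑ T ∈ S.filter (fun T => ¬ T ⊆ KEs), ∏ e' ∈ T, wf KEs e0 xv ε e') := by
    unfold Money.Digraph.price
    rw [← hS]
    exact (Finset.sum_filter_add_sum_filter_not S _ _).symm
  refine ⟨∑ T ∈ S.filter (fun T => ¬ T ⊆ KEs), ∏ e' ∈ T, wf KEs e0 xv ε e', ?_, ?_, ?_⟩
  · rw [hsplit, hS0]
    congr 1
    refine Finset.sum_congr rfl ?_
    intro T hT
    rw [← hS0] at hT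
    exact prod_wf_of_subset (Finset.mem_filter.mp hT).2
  · refine Finset.sum_nonneg ?_
    intro T hT
    exact (prod_wf_small (Finset.mem_filter.mp hT).2 he0 hxv0 hxv2 hε0 hε1).1
  · calc (∑ T ∈ S.filter (fun T => ¬ T ⊆ KEs), ∏ e' ∈ T, wf KEs e0 xv ε e')
        ≤ (S.filter (fun T => ¬ T ⊆ KEs)).card • (2 * ε) := by
          refine Finset.sum_le_card_nsmul _ _ _ ?_
          intro T hT
          exact (prod_wf_small (Finset.mem_filter.mp hT).2 he0 hxv0 hxv2 hε0 hε1).2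
      _ ≤ (G.edges.powerset.card : ℝ) * (2 * ε) := by
          rw [nsmul_eq_mul]
          refine mul_le_mul_of_nonneg_right ?_ (by positivity)
          have : (S.filter (fun T => ¬ T ⊆ KEs)).card ≤ G.edges.powerset.card := by
            refine Finset.card_le_card ?_
            intro T hT
            exact Finset.mem_powerset.mpr
              (Finset.mem_powerset.mp (Finset.mem_filter.mp
                (Finset.mem_filter.mp hT).1).1)
          exact_mod_cast this
  
lemma key_ineq {A1 A2 B1 B2 r1 r2 s1 s2 : ℝ}
    (hA1 : 0 ≤ A1) (hA1' : A1 ≤ 4) (hA2 : 0 ≤ A2) (hA2' : A2 ≤ 4)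
    (hB1 : 0 ≤ B1) (hB1' : B1 ≤ 4) (hB2 : 0 ≤ B2) (hB2' : B2 ≤ 4)
    (hr1 : 0 ≤ r1) (hr1' : r1 ≤ 1/50) (hr2 : 0 ≤ r2) (hr2' : r2 ≤ 1/50)
    (hs1 : 0 ≤ s1) (hs1' : s1 ≤ 1/50) (hs2 : 0 ≤ s2) (hs2' : s2 ≤ 1/50)
    (hlead : A1 * B2 + 1 ≤ A2 * B1 ∨ A2 * B1 + 1 ≤ A1 * B2) :
    (A1 + r1) * (B2 + s2) ≠ (A2 + r2) * (B1 + s1) := by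
  intro heq
  rcases hlead with h | h
  · nlinarith [mul_nonneg hr1 hs2, mul_nonneg hr2 hs1, mul_le_mul hr1' hs2' hs2 (by norm_num : (0:ℝ) ≤ 1/50), mul_le_mul hr2' hs1' hs1 (by norm_num : (0:ℝ) ≤ 1/50)]
  · nlinarith [mul_nonneg hr1 hs2, mul_nonneg hr2 hs1, mul_le_mul hr1' hs2' hs2 (by norm_num : (0:ℝ) ≤ 1/50), mul_le_mul hr2' hs1' hs1 (by norm_num : (0:ℝ) ≤ 1/50)]



lemma sum_ite_bounds {Sa : Finset (Finset (Fin n × Fin n))} {e0 : Fin n × Fin n}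
    (hcard : Sa.card ≤ 2) {xv : ℝ} (hxv0 : 0 < xv) (hxv2 : xv ≤ 2) :
    0 ≤ (∑ T ∈ Sa, if e0 ∈ T then xv else 1) ∧
    (∑ T ∈ Sa, if e0 ∈ T then xv else 1) ≤ 4 := by
  constructor
  · refine Finset.sum_nonneg ?_
    intro T _
    split <;> linarith
  · have h1 : (∑ T ∈ Sa, if e0 ∈ T then xv else 1) ≤ Sa.card • (2:ℝ) := by
      refine Finset.sum_le_card_nsmul _ _ _ ?_
      intro T _
      split <;> linarith
    have h2 : (Sa.card : ℝ) ≤ 2 := by exact_mod_cast hcard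
    rw [nsmul_eq_mul] at h1
    linarith

lemma influential_of {G : Digraph n} {a b : Fin n} {KEs : Finset (Fin n × Fin n)}
    {e0 : Fin n × Fin n} (he0K : e0 ∈ KEs)
    {Sa Sb : Finset (Finset (Fin n × Fin n))}
    (hSa : (G.edges.powerset.filter (fun T => G.IsSpanTree a T)).filter
      (fun T => T ⊆ KEs) = Sa)
    (hSb : (G.edges.powerset.filter (fun T => G.IsSpanTree b T)).filter
      (fun T => T ⊆ KEs) = Sb)
    (hcardA : Sa.card ≤ 2) (hcardB : Sb.card ≤ 2)
    {Tb0 : Finset (Fin n × Fin n)} (hTb0 : G.IsSpanTree b Tb0)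
    (hlead :
      (∑ T ∈ Sa, if e0 ∈ T then (1:ℝ) else 1) * (∑ T ∈ Sb, if e0 ∈ T then (2:ℝ) else 1) + 1 ≤
        (∑ T ∈ Sa, if e0 ∈ T then (2:ℝ) else 1) * (∑ T ∈ Sb, if e0 ∈ T then (1:ℝ) else 1) ∨
      (∑ T ∈ Sa, if e0 ∈ T then (2:ℝ) else 1) * (∑ T ∈ Sb, if e0 ∈ T then (1:ℝ) else 1) + 1 ≤
        (∑ T ∈ Sa, if e0 ∈ T then (1:ℝ) else 1) * (∑ T ∈ Sb, if e0 ∈ T then (2:ℝ) else 1)) :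
    G.Influential (G.priceRatio a b) e0 := by
  classical
  set N : ℝ := (G.edges.powerset.card : ℝ) with hN
  have hN0 : 0 ≤ N := by positivity
  set ε : ℝ := 1 / (100 * (N + 1)) with hε
  have hε0 : 0 < ε := by positivity
  have hε1 : ε ≤ 1 := by
    rw [hε]
    rw [div_le_one (by positivity)]
    linarith
  have herr : N * (2 * ε) ≤ 1 / 50 := by
    have h1 : (0:ℝ) < N + 1 := by linarith
    have h2 : N * (2 * ε) = (2 * N) / (100 * (N + 1)) := by
      rw [hε]
      field_simp
    rw [h2, div_le_div_iff₀ (by positivity) (by norm_num)]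
    linarith
  obtain ⟨r1, hr1eq, hr10, hr1b⟩ := price_form he0K hSa
    (xv := 1) (ε := ε) one_pos (by norm_num) hε0 hε1
  obtain ⟨r2, hr2eq, hr20, hr2b⟩ := price_form he0K hSa
    (xv := 2) (ε := ε) two_pos (by norm_num) hε0 hε1
  obtain ⟨s1, hs1eq, hs10, hs1b⟩ := price_form he0K hSb
    (xv := 1) (ε := ε) one_pos (by norm_num) hε0 hε1
  obtain ⟨s2, hs2eq, hs20, hs2b⟩ := price_form he0K hSb
    (xv := 2) (ε := ε) two_pos (by norm_num) hε0 hε1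
  have hbpos1 : 0 < G.price b (wf KEs e0 1 ε) :=
    price_pos (wf_pos one_pos hε0) hTb0
  have hbpos2 : 0 < G.price b (wf KEs e0 2 ε) :=
    price_pos (wf_pos two_pos hε0) hTb0
  refine ⟨wf KEs e0 1 ε, wf KEs e0 2 ε, ?_, ?_, ?_, ?_⟩
  · intro e' _; exact wf_pos one_pos hε0 e'
  · intro e' _; exact wf_pos two_pos hε0 e'
  · intro e' hne
    unfold wf
    simp [hne]
  · unfold Money.Digraph.priceRatio
    intro hcontra
    rw [div_eq_div_iff (ne_of_gt hbpos1) (ne_of_gt hbpos2)] at hcontra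
    rw [hr1eq, hr2eq, hs1eq, hs2eq] at hcontra
    obtain ⟨hA1, hA1'⟩ := sum_ite_bounds (e0 := e0) hcardA one_pos (by norm_num : (1:ℝ) ≤ 2)
    obtain ⟨hA2, hA2'⟩ := sum_ite_bounds (e0 := e0) hcardA two_pos (le_refl (2:ℝ))
    obtain ⟨hB1, hB1'⟩ := sum_ite_bounds (e0 := e0) hcardB one_pos (by norm_num : (1:ℝ) ≤ 2)
    obtain ⟨hB2, hB2'⟩ := sum_ite_bounds (e0 := e0) hcardB two_pos (le_refl (2:ℝ))
    exact key_ineq hA1 hA1' hA2 hA2' hB1 hB1' hB2 hB2'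
      hr10 (le_trans hr1b herr) hr20 (le_trans hr2b herr)
      hs10 (le_trans hs1b herr) hs20 (le_trans hs2b herr)
      hlead hcontra


namespace Pkg

variable {G : Digraph n} {v : Fin n} (P : Pkg G v)

lemma gamma_mem_Tx {x c : Fin n} : (v, c) ∈ P.Tx x (v, c) :=
  (P.mem_Tx).mpr (Or.inl rfl)

lemma gamma_notmem_Tx {x c c' : Fin n} (hcc' : c ≠ c') : (v, c) ∉ P.Tx x (v, c') := by
  intro h
  rcases (P.mem_Tx).mp h with h | h
  · exact hcc' (congrArg Prod.snd h)
  · exact P.no_v _ h.1 rfl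

lemma F_mem_Tx {x : Fin n} {c : Fin n} {e : Fin n × Fin n} (he : e ∈ P.F) :
    e ∈ P.Tx x (v, c) ↔ e.1 ≠ x := by
  constructor
  · intro h
    rcases (P.mem_Tx).mp h with h | h
    · exact absurd (congrArg Prod.fst h) (P.no_v _ he)
    · exact h.2
  · intro h
    exact (P.mem_Tx).mpr (Or.inr ⟨he, h⟩)

lemma Tx_ne {x a b : Fin n} (hab : a ≠ b) : P.Tx x (v, a) ≠ P.Tx x (v, b) := by
  intro h
  have := P.gamma_mem_Tx (x := x) (c := a)
  rw [h] at this
  exact P.gamma_notmem_Tx hab this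

/-- The set of spanning `b`-trees of `G` inside `KE` (when `a` does not flow
to `b`): only the `γ₂`-tree. -/
lemma Sb_eq {a b : Fin n} (hva : (v, a) ∈ G.edges) (hvb : (v, b) ∈ G.edges)
    (hab : a ≠ b) (hvV : v ∈ G.verts) (hbV : b ∈ G.verts) (hbv : b ≠ v)
    (hnr : ¬ ReflTransGen (Frel P.F) a b) :
    (G.edges.powerset.filter (fun T => G.IsSpanTree b T)).filter
      (fun T => T ⊆ P.KE a b) = {P.Tx b (v, b)} := by
  ext T
  simp only [Finset.mem_filter, Finset.mem_powerset, Finset.mem_singleton]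
  constructor
  · rintro ⟨⟨_, hT⟩, hsub⟩
    rcases P.classify hab hvV hbV hbv hsub hT with ⟨h1, h2⟩ | ⟨h1, _⟩
    · exact absurd h2 hnr
    · exact h1
  · rintro rfl
    have hT := P.isSpanTree_tx hbV hbv hvb rfl ReflTransGen.refl
    exact ⟨⟨hT.1, hT⟩, P.tx_subset_KE (Or.inr rfl)⟩

lemma Sa_eq_not {a b : Fin n} (hva : (v, a) ∈ G.edges) (hvb : (v, b) ∈ G.edges)
    (hab : a ≠ b) (hvV : v ∈ G.verts) (haV : a ∈ G.verts) (hav : a ≠ v)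
    (hq : ¬ ReflTransGen (Frel P.F) b a) :
    (G.edges.powerset.filter (fun T => G.IsSpanTree a T)).filter
      (fun T => T ⊆ P.KE a b) = {P.Tx a (v, a)} := by
  ext T
  simp only [Finset.mem_filter, Finset.mem_powerset, Finset.mem_singleton]
  constructor
  · rintro ⟨⟨_, hT⟩, hsub⟩
    rcases P.classify hab hvV haV hav hsub hT with ⟨h1, _⟩ | ⟨h1, h2⟩
    · exact h1
    · exact absurd h2 hq
  · rintro rfl
    have hT := P.isSpanTree_tx haV hav hva rfl ReflTransGen.refl
    exact ⟨⟨hT.1, hT⟩, P.tx_subset_KE (Or.inl rfl)⟩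

lemma Sa_eq_yes {a b : Fin n} (hva : (v, a) ∈ G.edges) (hvb : (v, b) ∈ G.edges)
    (hab : a ≠ b) (hvV : v ∈ G.verts) (haV : a ∈ G.verts) (hav : a ≠ v)
    (hq : ReflTransGen (Frel P.F) b a) :
    (G.edges.powerset.filter (fun T => G.IsSpanTree a T)).filter
      (fun T => T ⊆ P.KE a b) = {P.Tx a (v, a), P.Tx a (v, b)} := by
  ext T
  simp only [Finset.mem_filter, Finset.mem_powerset, Finset.mem_insert,
    Finset.mem_singleton]
  constructor
  · rintro ⟨⟨_, hT⟩, hsub⟩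
    rcases P.classify hab hvV haV hav hsub hT with ⟨h1, _⟩ | ⟨h1, _⟩
    · exact Or.inl h1
    · exact Or.inr h1
  · rintro (rfl | rfl)
    · have hT := P.isSpanTree_tx haV hav hva rfl ReflTransGen.refl
      exact ⟨⟨hT.1, hT⟩, P.tx_subset_KE (Or.inl rfl)⟩
    · have hT := P.isSpanTree_tx haV hav hvb rfl hq
      exact ⟨⟨hT.1, hT⟩, P.tx_subset_KE (Or.inr rfl)⟩

/-- The main lemma: with a branching vertex `v` whose out-neighbour `a` does
not flow to the other out-neighbour `b`, the pair `(a, b)` has at least four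
influential edges. -/
lemma main {a b : Fin n} (hva : (v, a) ∈ G.edges) (hvb : (v, b) ∈ G.edges)
    (hab : a ≠ b) (hnr : ¬ ReflTransGen (Frel P.F) a b) :
    4 ≤ G.priceCplxPair a b := by
  classical
  have hvV : v ∈ G.verts := (G.mem_verts _ hva).1
  have haV : a ∈ G.verts := (G.mem_verts _ hva).2
  have hbV : b ∈ G.verts := (G.mem_verts _ hvb).2
  have hav : a ≠ v := fun h => G.no_loops _ hva (show v = a from h.symm)
  have hbv : b ≠ v := fun h => G.no_loops _ hvb (show v = b from h.symm)
  obtain ⟨fa, hfaF, hfa1⟩ := P.exist_out a haV hav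
  obtain ⟨fb, hfbF, hfb1⟩ := P.exist_out b hbV hbv
  have hfaE : fa ∈ G.edges := P.sub hfaF
  have hfbE : fb ∈ G.edges := P.sub hfbF
  have hTb2 : G.IsSpanTree b (P.Tx b (v, b)) :=
    P.isSpanTree_tx hbV hbv hvb rfl ReflTransGen.refl
  have hSb := P.Sb_eq hva hvb hab hvV hbV hbv hnr
  -- membership facts
  have hg1Ta1 : (v, a) ∈ P.Tx a (v, a) := P.gamma_mem_Tx
  have hg1Ta2 : (v, a) ∉ P.Tx a (v, b) := P.gamma_notmem_Tx hab
  have hg1Tb2 : (v, a) ∉ P.Tx b (v, b) := P.gamma_notmem_Tx hab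
  have hg2Ta1 : (v, b) ∉ P.Tx a (v, a) := P.gamma_notmem_Tx (Ne.symm hab)
  have hg2Ta2 : (v, b) ∈ P.Tx a (v, b) := P.gamma_mem_Tx
  have hg2Tb2 : (v, b) ∈ P.Tx b (v, b) := P.gamma_mem_Tx
  have hfaTa1 : fa ∉ P.Tx a (v, a) := by
    rw [P.F_mem_Tx hfaF, hfa1]; simp
  have hfaTa2 : fa ∉ P.Tx a (v, b) := by
    rw [P.F_mem_Tx hfaF, hfa1]; simp
  have hfaTb2 : fa ∈ P.Tx b (v, b) := by
    rw [P.F_mem_Tx hfaF, hfa1]; exact hab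
  have hfbTa1 : fb ∈ P.Tx a (v, a) := by
    rw [P.F_mem_Tx hfbF, hfb1]; exact (Ne.symm hab)
  have hfbTa2 : fb ∈ P.Tx a (v, b) := by
    rw [P.F_mem_Tx hfbF, hfb1]; exact (Ne.symm hab)
  have hfbTb2 : fb ∉ P.Tx b (v, b) := by
    rw [P.F_mem_Tx hfbF, hfb1]; simp
  have hKEg1 : (v, a) ∈ P.KE a b := (P.mem_KE).mpr (Or.inl rfl)
  have hKEg2 : (v, b) ∈ P.KE a b := (P.mem_KE).mpr (Or.inr (Or.inl rfl))
  have hKEfa : fa ∈ P.KE a b := (P.mem_KE).mpr (Or.inr (Or.inr hfaF))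
  have hKEfb : fb ∈ P.KE a b := (P.mem_KE).mpr (Or.inr (Or.inr hfbF))
  -- influence of the four edges
  have hinfl : ∀ e0 ∈ ({(v, a), (v, b), fa, fb} : Finset (Fin n × Fin n)),
      G.Influential (G.priceRatio a b) e0 := by
    intro e0 he0
    by_cases hq : ReflTransGen (Frel P.F) b a
    · have hSa := P.Sa_eq_yes hva hvb hab hvV haV hav hq
      have hne := P.Tx_ne (x := a) hab
      simp only [Finset.mem_insert, Finset.mem_singleton] at he0
      rcases he0 with rfl | rfl | rfl | rfl
      · refine influential_of hKEg1 hSa hSb ?_ ?_ hTb2 ?_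
        · rw [Finset.card_insert_of_notMem (by simpa using hne), Finset.card_singleton]
        · rw [Finset.card_singleton]; norm_num
        · rw [Finset.sum_pair hne, Finset.sum_pair hne, Finset.sum_singleton,
            Finset.sum_singleton, if_pos hg1Ta1, if_pos hg1Ta1, if_neg hg1Ta2,
            if_neg hg1Ta2, if_neg hg1Tb2, if_neg hg1Tb2]
          left; norm_num
      · refine influential_of hKEg2 hSa hSb ?_ ?_ hTb2 ?_
        · rw [Finset.card_insert_of_notMem (by simpa using hne), Finset.card_singleton]
        · rw [Finset.card_singleton]; norm_num
        · rw [Finset.sum_pair hne, Finset.sum_pair hne, Finset.sum_singleton,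
            Finset.sum_singleton, if_neg hg2Ta1, if_neg hg2Ta1, if_pos hg2Ta2,
            if_pos hg2Ta2, if_pos hg2Tb2, if_pos hg2Tb2]
          right; norm_num
      · refine influential_of hKEfa hSa hSb ?_ ?_ hTb2 ?_
        · rw [Finset.card_insert_of_notMem (by simpa using hne), Finset.card_singleton]
        · rw [Finset.card_singleton]; norm_num
        · rw [Finset.sum_pair hne, Finset.sum_pair hne, Finset.sum_singleton,
            Finset.sum_singleton, if_neg hfaTa1, if_neg hfaTa1, if_neg hfaTa2,
            if_neg hfaTa2, if_pos hfaTb2, if_pos hfaTb2]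
          right; norm_num
      · refine influential_of hKEfb hSa hSb ?_ ?_ hTb2 ?_
        · rw [Finset.card_insert_of_notMem (by simpa using hne), Finset.card_singleton]
        · rw [Finset.card_singleton]; norm_num
        · rw [Finset.sum_pair hne, Finset.sum_pair hne, Finset.sum_singleton,
            Finset.sum_singleton, if_pos hfbTa1, if_pos hfbTa1, if_pos hfbTa2,
            if_pos hfbTa2, if_neg hfbTb2, if_neg hfbTb2]
          left; norm_num
    · have hSa := P.Sa_eq_not hva hvb hab hvV haV hav hq
      simp only [Finset.mem_insert, Finset.mem_singleton] at he0
      rcases he0 with rfl | rfl | rfl | rfl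
      · refine influential_of hKEg1 hSa hSb ?_ ?_ hTb2 ?_
        · rw [Finset.card_singleton]; norm_num
        · rw [Finset.card_singleton]; norm_num
        · rw [Finset.sum_singleton, Finset.sum_singleton, Finset.sum_singleton,
            Finset.sum_singleton, if_pos hg1Ta1, if_pos hg1Ta1,
            if_neg hg1Tb2, if_neg hg1Tb2]
          left; norm_num
      · refine influential_of hKEg2 hSa hSb ?_ ?_ hTb2 ?_
        · rw [Finset.card_singleton]; norm_num
        · rw [Finset.card_singleton]; norm_num
        · rw [Finset.sum_singleton, Finset.sum_singleton, Finset.sum_singleton,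
            Finset.sum_singleton, if_neg hg2Ta1, if_neg hg2Ta1,
            if_pos hg2Tb2, if_pos hg2Tb2]
          right; norm_num
      · refine influential_of hKEfa hSa hSb ?_ ?_ hTb2 ?_
        · rw [Finset.card_singleton]; norm_num
        · rw [Finset.card_singleton]; norm_num
        · rw [Finset.sum_singleton, Finset.sum_singleton, Finset.sum_singleton,
            Finset.sum_singleton, if_neg hfaTa1, if_neg hfaTa1,
            if_pos hfaTb2, if_pos hfaTb2]
          right; norm_num
      · refine influential_of hKEfb hSa hSb ?_ ?_ hTb2 ?_
        · rw [Finset.card_singleton]; norm_num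
        · rw [Finset.card_singleton]; norm_num
        · rw [Finset.sum_singleton, Finset.sum_singleton, Finset.sum_singleton,
            Finset.sum_singleton, if_pos hfbTa1, if_pos hfbTa1,
            if_neg hfbTb2, if_neg hfbTb2]
          left; norm_num
  -- cardinality
  unfold Money.Digraph.priceCplxPair
  have hsub4 : ({(v, a), (v, b), fa, fb} : Finset (Fin n × Fin n)) ⊆
      G.edges.filter (fun e => G.Influential (G.priceRatio a b) e) := by
    intro e0 he0
    refine Finset.mem_filter.mpr ⟨?_, hinfl e0 he0⟩
    simp only [Finset.mem_insert, Finset.mem_singleton] at he0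
    rcases he0 with rfl | rfl | rfl | rfl
    · exact hva
    · exact hvb
    · exact hfaE
    · exact hfbE
  have hcard4 : ({(v, a), (v, b), fa, fb} : Finset (Fin n × Fin n)).card = 4 := by
    have h1 : (v, a) ≠ (v, b) := fun h => hab (congrArg Prod.snd h)
    have h2 : (v, a) ≠ fa := fun h => hav.symm (by rw [← hfa1, ← h])
    have h3 : (v, a) ≠ fb := fun h => hbv.symm (by rw [← hfb1, ← h])
    have h4 : (v, b) ≠ fa := fun h => hav.symm (by rw [← hfa1, ← h])
    have h5 : (v, b) ≠ fb := fun h => hbv.symm (by rw [← hfb1, ← h])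
    have h6 : fa ≠ fb := fun h => hab (by rw [← hfa1, ← hfb1, h])
    rw [Finset.card_insert_of_notMem (by simp [h1, h2, h3]),
      Finset.card_insert_of_notMem (by simp [h4, h5]),
      Finset.card_insert_of_notMem (by simp [h6]), Finset.card_singleton]
  calc 4 = ({(v, a), (v, b), fa, fb} : Finset (Fin n × Fin n)).card := hcard4.symm
    _ ≤ _ := Finset.card_le_card hsub4

end Pkg


lemma outdeg_pos {G : Digraph n} (hc : G.Connected) (h2 : 2 ≤ G.verts.card)
    {u : Fin n} (hu : u ∈ G.verts) : 0 < G.outdeg u := by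
  obtain ⟨w, hw, hwu⟩ := Finset.exists_mem_ne
    (show 1 < G.verts.card by omega) u
  have hr := hc.2 u hu w hw
  rcases Relation.ReflTransGen.cases_head hr with h | ⟨c, hstep, _⟩
  · exact absurd h (fun hh => hwu hh.symm)
  · unfold Money.Digraph.outdeg
    refine Finset.card_pos.mpr ⟨(u, c), ?_⟩
    exact Finset.mem_filter.mpr ⟨hstep, rfl⟩

lemma indeg_pos {G : Digraph n} (hc : G.Connected) (h2 : 2 ≤ G.verts.card)
    {u : Fin n} (hu : u ∈ G.verts) : 0 < G.indeg u := by
  obtain ⟨w, hw, hwu⟩ := Finset.exists_mem_ne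
    (show 1 < G.verts.card by omega) u
  have hr := hc.2 w hw u hu
  rcases Relation.ReflTransGen.cases_tail hr with h | ⟨c, _, hstep⟩
  · exact absurd h (fun hh => hwu hh.symm)
  · unfold Money.Digraph.indeg
    refine Finset.card_pos.mpr ⟨(c, u), ?_⟩
    exact Finset.mem_filter.mpr ⟨hstep, rfl⟩

lemma exists_branching {G : Digraph n} (hc : G.Connected) (h2 : 2 ≤ G.verts.card)
    (h : ¬G.IsCycleGraph) :
    ∃ v a b, (v, a) ∈ G.edges ∧ (v, b) ∈ G.edges ∧ a ≠ b := by
  classical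
  have hsumout : G.edges.card = ∑ u ∈ G.verts, G.outdeg u := by
    unfold Money.Digraph.outdeg
    exact Finset.card_eq_sum_card_fiberwise (fun e he => (G.mem_verts e he).1)
  have hsumin : G.edges.card = ∑ u ∈ G.verts, G.indeg u := by
    unfold Money.Digraph.indeg
    exact Finset.card_eq_sum_card_fiberwise (fun e he => (G.mem_verts e he).2)
  have hbr : ∃ v ∈ G.verts, 2 ≤ G.outdeg v := by
    by_contra hno
    push_neg at hno
    have hout1 : ∀ u ∈ G.verts, G.outdeg u = 1 := by
      intro u hu
      have := hno u hu
      have := outdeg_pos hc h2 hu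
      omega
    have hEV : G.edges.card = G.verts.card := by
      rw [hsumout, Finset.sum_congr rfl hout1, Finset.sum_const, smul_eq_mul, mul_one]
    have hin1 : ∀ u ∈ G.verts, G.indeg u = 1 := by
      by_contra hno2
      push_neg at hno2
      obtain ⟨u0, hu0, hu0ne⟩ := hno2
      have hu0ge : 2 ≤ G.indeg u0 := by
        have := indeg_pos hc h2 hu0
        omega
      have hlt : ∑ u ∈ G.verts, (1 : ℕ) < ∑ u ∈ G.verts, G.indeg u := by
        refine Finset.sum_lt_sum (fun u hu => indeg_pos hc h2 hu) ⟨u0, hu0, by omega⟩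
      rw [Finset.sum_const, smul_eq_mul, mul_one] at hlt
      omega
    exact h ⟨hc, fun u hu => ⟨hout1 u hu, hin1 u hu⟩⟩
  obtain ⟨v, hv, hdeg⟩ := hbr
  unfold Money.Digraph.outdeg at hdeg
  obtain ⟨e1, he1, e2, he2, hne⟩ := Finset.one_lt_card.mp
    (lt_of_lt_of_le one_lt_two hdeg)
  obtain ⟨he1E, he1v⟩ := Finset.mem_filter.mp he1
  obtain ⟨he2E, he2v⟩ := Finset.mem_filter.mp he2
  refine ⟨v, e1.2, e2.2, ?_, ?_, ?_⟩
  · rwa [← he1v, Prod.mk.eta]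
  · rwa [← he2v, Prod.mk.eta]
  · intro hsnd
    apply hne
    have : e1 = (v, e1.2) := by rw [← he1v]
    have h2' : e2 = (v, e2.2) := by rw [← he2v]
    rw [this, h2', hsnd]

end Stmt8Aux

open Money Money.Digraph

/-- a connected graph with at least two vertices that is not a
directed cycle has `π_ij(G) ≥ 4` for some `i ≠ j`. -/
theorem stmt8 {n : ℕ} (G : Money.Digraph n) (hc : G.Connected)
    (h2 : 2 ≤ G.verts.card) (h : ¬G.IsCycleGraph) :
    ∃ i ∈ G.verts, ∃ j ∈ G.verts, i ≠ j ∧ 4 ≤ G.priceCplxPair i j := by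
  classical
  obtain ⟨v, a, b, hva, hvb, hab⟩ := Stmt8Aux.exists_branching hc h2 h
  have hvV : v ∈ G.verts := (G.mem_verts _ hva).1
  obtain ⟨P⟩ := Stmt8Aux.grow G hc v hvV
  have haV : a ∈ G.verts := (G.mem_verts _ hva).2
  have hbV : b ∈ G.verts := (G.mem_verts _ hvb).2
  by_cases hr : Relation.ReflTransGen (Stmt8Aux.Frel P.F) a b
  · have hnr : ¬ Relation.ReflTransGen (Stmt8Aux.Frel P.F) b a := by
      intro hr'
      exact hab (P.antisym hr hr')
    exact ⟨b, hbV, a, haV, Ne.symm hab, P.main hvb hva (Ne.symm hab) hnr⟩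
  · exact ⟨a, haV, b, hbV, hab, P.main hva hvb hab hr⟩
end
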